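/- arXiv:1911.05170 — 8 statements merged into one kernel-verified Lean document; each statement's English description precedes it below -/
import Mathlib

section
/- For any integers 1 ≤ d ≤ m and reals x_1,…,x_d ∈ [0,1], the power mean M_{1/γ_m}(x_1,…,x_d) = ((x_1^{1/γ_m}+⋯+x_d^{1/γ_m})/d)^{γ_m} is at most the max-choice average (1/d²)·Σ_{i=1}^d Σ_{j=1}^d max(x_i,x_j), where γ_m = log_m(m²/(2m−1)). -/
/-!
Sort `x` and write it as a nonnegative combination `∑ₖ tₖ 1_{i ≥ k}` of nested layers. The
max-choice sum is additive on such combinations, while the `ℓ^{1/γ}` norm is subadditive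
(Minkowski), so it suffices to compare the two sides on a single layer of size `d - k`, i.e. to
show `u ^ γ ≤ u (2 - u)` for `u = (d - k) / d ∈ [1/m, 1]`. With `b = 1/m`, `γ = γ_m` is exactly
the exponent with `b ^ γ = b (2 - b)`; writing `u = b ^ λ` with `λ ∈ [0, 1]` the inequality
becomes `(2 - b) ^ λ + b ^ λ ≤ 2`, which is concavity of `t ↦ t ^ λ`.
-/

open Real Finset

theorem rpow_le_mul_two_sub_of_le {b γ u : ℝ} (hb0 : 0 < b) (hb1 : b < 1)
    (hγ : b ^ γ = b * (2 - b)) (hbu : b ≤ u) (hu1 : u ≤ 1) : u ^ γ ≤ u * (2 - u) := by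
  have hu0 : 0 < u := hb0.trans_le hbu
  set l := logb b u
  have hu : b ^ l = u := rpow_logb hb0 hb1.ne hu0
  have hl0 : 0 ≤ l := logb_nonneg_of_base_lt_one hb0 hb1 hu0 hu1
  have hl1 : l ≤ 1 := by
    have hbb : logb b b = 1 := logb_self_eq_one_iff.2 ⟨hb0.ne', hb1.ne, by linarith⟩
    exact hbb ▸ (logb_le_logb_of_base_lt_one hb0 hb1 hu0 hb0).2 hbu
  have hconc : (2 - b) ^ l + b ^ l ≤ 2 := by
    have h₁ := rpow_one_add_le_one_add_mul_self (s := 1 - b) (by linarith) hl0 hl1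
    have h₂ := rpow_one_add_le_one_add_mul_self (s := b - 1) (by linarith) hl0 hl1
    rw [show 1 + (1 - b) = 2 - b by ring] at h₁
    rw [show 1 + (b - 1) = b by ring] at h₂
    linarith
  calc u ^ γ = (b ^ γ) ^ l := by rw [← hu, ← rpow_mul hb0.le, mul_comm, rpow_mul hb0.le]
    _ = u * (2 - b) ^ l := by rw [hγ, mul_rpow hb0.le (by linarith), hu]
    _ ≤ u * (2 - u) := by gcongr; linarith

theorem pos_and_lt_one_of_rpow_eq_mul_two_sub {b γ : ℝ} (hb0 : 0 < b) (hb1 : b < 1)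
    (hγ : b ^ γ = b * (2 - b)) : 0 < γ ∧ γ < 1 := by
  constructor
  · rw [← rpow_lt_rpow_left_iff_of_base_lt_one hb0 hb1, rpow_zero, hγ]
    nlinarith
  · rw [← rpow_lt_rpow_left_iff_of_base_lt_one hb0 hb1, rpow_one, hγ]
    nlinarith

theorem rpow_sub_div_le_of_rpow_eq {b γ : ℝ} (hb0 : 0 < b) (hb1 : b < 1)
    (hγ : b ^ γ = b * (2 - b)) {d k : ℕ} (hkd : k < d) (hbd : b * d ≤ 1) :
    (((d - k : ℕ) : ℝ) / d) ^ γ ≤ ((d : ℝ) ^ 2 - (k : ℝ) ^ 2) / (d : ℝ) ^ 2 := by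
  have hd : (0 : ℝ) < d := by exact_mod_cast k.zero_le.trans_lt hkd
  have hk1 : (k : ℝ) + 1 ≤ d := by exact_mod_cast hkd
  have hcast : ((d - k : ℕ) : ℝ) = d - k := by push_cast [hkd.le]; ring
  have hbu : b ≤ (d - k : ℝ) / d := by rw [le_div_iff₀ hd]; nlinarith
  have hu1 : (d - k : ℝ) / d ≤ 1 := by
    rw [div_le_one hd]; linarith [(Nat.cast_nonneg k : (0 : ℝ) ≤ k)]
  calc (((d - k : ℕ) : ℝ) / d) ^ γ
      ≤ (d - k : ℝ) / d * (2 - (d - k : ℝ) / d) := by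
        rw [hcast]; exact rpow_le_mul_two_sub_of_le hb0 hb1 hγ hbu hu1
    _ = ((d : ℝ) ^ 2 - (k : ℝ) ^ 2) / (d : ℝ) ^ 2 := by field_simp; ring

theorem Real.Lp_sum_le_sum_Lp_of_nonneg {κ ι : Type*} [DecidableEq κ] (s : Finset κ)
    (u : Finset ι) (f : κ → ι → ℝ) {p : ℝ} (hp : 1 ≤ p) (hf : ∀ k ∈ s, ∀ i ∈ u, 0 ≤ f k i) :
    (∑ i ∈ u, (∑ k ∈ s, f k i) ^ p) ^ (1 / p) ≤ ∑ k ∈ s, (∑ i ∈ u, f k i ^ p) ^ (1 / p) := by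
  induction s using Finset.induction with
  | empty => simp [zero_rpow (by positivity : p ≠ 0), zero_rpow (by positivity : p⁻¹ ≠ 0)]
  | insert a s ha ih =>
    simp only [sum_insert ha]
    have hs : ∀ i ∈ u, 0 ≤ ∑ k ∈ s, f k i := fun i hi =>
      sum_nonneg fun k hk => hf k (mem_insert_of_mem hk) i hi
    calc (∑ i ∈ u, (f a i + ∑ k ∈ s, f k i) ^ p) ^ (1 / p)
        ≤ (∑ i ∈ u, f a i ^ p) ^ (1 / p) + (∑ i ∈ u, (∑ k ∈ s, f k i) ^ p) ^ (1 / p) :=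
          Lp_add_le_of_nonneg u hp (hf a (mem_insert_self a s)) hs
      _ ≤ (∑ i ∈ u, f a i ^ p) ^ (1 / p) + ∑ k ∈ s, (∑ i ∈ u, f k i ^ p) ^ (1 / p) := by
          gcongr
          exact ih fun k hk => hf k (mem_insert_of_mem hk)

theorem sum_range_if_le_rpow {d k : ℕ} {p c : ℝ} (hp : 0 < p) :
    ∑ i ∈ range d, (if k ≤ i then c else 0) ^ p = ((d - k : ℕ) : ℝ) * c ^ p := by
  simp_rw [apply_ite (· ^ p), zero_rpow hp.ne', ← sum_filter, sum_const, nsmul_eq_mul]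
  congr 2
  rw [← Nat.card_Ico]
  congr 1; ext i; simp [and_comm]

theorem Lp_sum_range_partialSum_le {t : ℕ → ℝ} (ht : ∀ k, 0 ≤ t k) (d : ℕ) {p : ℝ} (hp : 1 ≤ p) :
    (∑ i ∈ range d, (∑ k ∈ range (i + 1), t k) ^ p) ^ (1 / p) ≤
      ∑ k ∈ range d, ((d - k : ℕ) : ℝ) ^ (1 / p) * t k := by
  have hlayers : ∀ i ∈ range d, ∑ k ∈ range (i + 1), t k =
      ∑ k ∈ range d, if k ≤ i then t k else 0 := by
    intro i hi
    rw [← sum_filter]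
    congr 1; ext k; simp only [mem_range, mem_filter] at hi ⊢; omega
  rw [sum_congr rfl fun i hi => by rw [hlayers i hi]]
  refine (Real.Lp_sum_le_sum_Lp_of_nonneg _ _ _ hp fun k _ i _ => ?_).trans_eq ?_
  · split_ifs <;> simp [ht]
  · refine sum_congr rfl fun k _ => ?_
    rw [sum_range_if_le_rpow (by positivity), mul_rpow (by positivity) (rpow_nonneg (ht k) _),
      ← rpow_mul (ht k), mul_one_div_cancel (zero_lt_one.trans_le hp).ne', rpow_one]

theorem sum_range_sum_range_max_partialSum {t : ℕ → ℝ} (ht : ∀ k, 0 ≤ t k) (d : ℕ) :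
    ∑ i ∈ range d, ∑ j ∈ range d,
        max (∑ k ∈ range (i + 1), t k) (∑ k ∈ range (j + 1), t k) =
      ∑ k ∈ range d, ((d : ℝ) ^ 2 - (k : ℝ) ^ 2) * t k := by
  set S : ℕ → ℝ := fun n => ∑ k ∈ range (n + 1), t k
  change ∑ i ∈ range d, ∑ j ∈ range d, max (S i) (S j) = _
  have hmono : Monotone S := fun i j hij =>
    sum_le_sum_of_subset_of_nonneg (range_subset_range.2 (by omega)) fun k _ _ => ht k
  induction d with
  | zero => simp
  | succ d ih =>
    have hmax : ∀ i ∈ range d, max (S i) (S d) = S d := fun i hi =>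
      max_eq_right (hmono (mem_range.1 hi).le)
    have hmax' : ∀ i ∈ range d, max (S d) (S i) = S d := fun i hi => by rw [max_comm, hmax i hi]
    calc ∑ i ∈ range (d + 1), ∑ j ∈ range (d + 1), max (S i) (S j)
        = ∑ i ∈ range d, ∑ j ∈ range d, max (S i) (S j) + (2 * d + 1) * S d := by
          simp only [sum_range_succ, sum_add_distrib, sum_congr rfl hmax, sum_congr rfl hmax',
            max_self, sum_const, card_range, nsmul_eq_mul]
          ring
      _ = ∑ k ∈ range (d + 1), (((d + 1 : ℕ) : ℝ) ^ 2 - (k : ℝ) ^ 2) * t k := by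
          have hk : ∀ k : ℕ, (((d + 1 : ℕ) : ℝ) ^ 2 - (k : ℝ) ^ 2) * t k =
              ((d : ℝ) ^ 2 - (k : ℝ) ^ 2) * t k + (2 * d + 1) * t k := fun k => by push_cast; ring
          rw [ih, sum_congr rfl fun k _ => hk k, sum_add_distrib, ← mul_sum,
            sum_range_succ (fun k => ((d : ℝ) ^ 2 - (k : ℝ) ^ 2) * t k)]
          simp [S]

theorem exists_nonneg_partialSum_eq_of_monotone {d : ℕ} {y : Fin d → ℝ} (hy : Monotone y)
    (hy0 : ∀ i, 0 ≤ y i) :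
    ∃ t : ℕ → ℝ, (∀ k, 0 ≤ t k) ∧ ∀ i : Fin d, y i = ∑ k ∈ range (i + 1), t k := by
  cases d with
  | zero => exact ⟨0, fun _ => le_rfl, fun i => i.elim0⟩
  | succ n =>
    let g : ℕ → ℝ := fun | 0 => 0 | k + 1 => y (Fin.clamp k n)
    have hg : Monotone g := monotone_nat_of_le_succ fun
      | 0 => hy0 _
      | k + 1 => hy (Fin.clamp_monotone k.le_succ)
    refine ⟨fun k => g (k + 1) - g k, fun k => sub_nonneg.2 (hg k.le_succ), fun i => ?_⟩
    rw [sum_range_sub]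
    change y i = y (Fin.clamp i n) - 0
    rw [sub_zero]
    congr
    ext
    simp [Fin.clamp, Nat.lt_succ_iff.1 i.isLt]

theorem rpowMean_partialSum_le_maxChoice {b γ : ℝ} (hb0 : 0 < b) (hb1 : b < 1)
    (hγ : b ^ γ = b * (2 - b)) {t : ℕ → ℝ} (ht : ∀ k, 0 ≤ t k) {d : ℕ} (hbd : b * d ≤ 1) :
    ((∑ i ∈ range d, (∑ k ∈ range (i + 1), t k) ^ γ⁻¹) / d) ^ γ ≤
      1 / (d : ℝ) ^ 2 * ∑ i ∈ range d, ∑ j ∈ range d,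
        max (∑ k ∈ range (i + 1), t k) (∑ k ∈ range (j + 1), t k) := by
  obtain ⟨hγ0, hγ1⟩ := pos_and_lt_one_of_rpow_eq_mul_two_sub hb0 hb1 hγ
  have hsum : 0 ≤ ∑ i ∈ range d, (∑ k ∈ range (i + 1), t k) ^ γ⁻¹ :=
    sum_nonneg fun i _ => rpow_nonneg (sum_nonneg fun k _ => ht k) _
  calc ((∑ i ∈ range d, (∑ k ∈ range (i + 1), t k) ^ γ⁻¹) / d) ^ γ
      = (∑ i ∈ range d, (∑ k ∈ range (i + 1), t k) ^ γ⁻¹) ^ (1 / γ⁻¹) / (d : ℝ) ^ γ := by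
        rw [div_rpow hsum d.cast_nonneg, one_div, inv_inv]
    _ ≤ (∑ k ∈ range d, ((d - k : ℕ) : ℝ) ^ (1 / γ⁻¹) * t k) / (d : ℝ) ^ γ := by
        gcongr
        exact Lp_sum_range_partialSum_le ht d (one_le_inv₀ hγ0 |>.2 hγ1.le)
    _ = ∑ k ∈ range d, (((d - k : ℕ) : ℝ) / d) ^ γ * t k := by
        rw [sum_div]
        refine sum_congr rfl fun k _ => ?_
        rw [one_div, inv_inv, div_rpow (Nat.cast_nonneg _) d.cast_nonneg]
        ring
    _ ≤ ∑ k ∈ range d, ((d : ℝ) ^ 2 - (k : ℝ) ^ 2) / (d : ℝ) ^ 2 * t k :=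
        sum_le_sum fun k hk => mul_le_mul_of_nonneg_right
          (rpow_sub_div_le_of_rpow_eq hb0 hb1 hγ (mem_range.1 hk) hbd) (ht k)
    _ = _ := by
        rw [sum_range_sum_range_max_partialSum ht, mul_sum]
        exact sum_congr rfl fun k _ => by ring

theorem rpowMean_le_maxChoice_of_monotone {b γ : ℝ} (hb0 : 0 < b) (hb1 : b < 1)
    (hγ : b ^ γ = b * (2 - b)) {d : ℕ} (hbd : b * d ≤ 1) {y : Fin d → ℝ} (hy : Monotone y)
    (hy0 : ∀ i, 0 ≤ y i) :
    ((∑ i, y i ^ γ⁻¹) / d) ^ γ ≤ 1 / (d : ℝ) ^ 2 * ∑ i, ∑ j, max (y i) (y j) := by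
  obtain ⟨t, ht, hyt⟩ := exists_nonneg_partialSum_eq_of_monotone hy hy0
  simpa only [hyt, Finset.sum_range] using rpowMean_partialSum_le_maxChoice hb0 hb1 hγ ht hbd

theorem rpowMean_le_maxChoice {b γ : ℝ} (hb0 : 0 < b) (hb1 : b < 1)
    (hγ : b ^ γ = b * (2 - b)) {d : ℕ} (hbd : b * d ≤ 1) {x : Fin d → ℝ} (hx : ∀ i, 0 ≤ x i) :
    ((∑ i, x i ^ γ⁻¹) / d) ^ γ ≤ 1 / (d : ℝ) ^ 2 * ∑ i, ∑ j, max (x i) (x j) := by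
  have hsorted := rpowMean_le_maxChoice_of_monotone hb0 hb1 hγ hbd (Tuple.monotone_sort x)
    fun i => hx _
  set σ := Tuple.sort x
  have hinner (i : Fin d) : ∑ j, max (x (σ i)) (x (σ j)) = ∑ j, max (x (σ i)) (x j) :=
    Equiv.sum_comp σ fun j => max (x (σ i)) (x j)
  simpa only [Function.comp_apply, hinner, Equiv.sum_comp σ fun i => x i ^ γ⁻¹,
    Equiv.sum_comp σ fun i => ∑ j, max (x i) (x j)] using hsorted

theorem inv_rpow_log_sq_div_log_eq {m : ℝ} (hm : 1 < m) :
    m⁻¹ ^ (Real.log (m ^ 2 / (2 * m - 1)) / Real.log m) = m⁻¹ * (2 - m⁻¹) := by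
  have h2m : 0 < 2 * m - 1 := by linarith
  rw [log_div_log, inv_rpow (by positivity), rpow_logb (by positivity) hm.ne' (by positivity)]
  field_simp

theorem powerMean_le_maxChoice_general (m d : ℕ) (hm : 2 ≤ m) (hdm : d ≤ m)
    (x : Fin d → ℝ) (hx : ∀ i, x i ∈ Set.Icc (0 : ℝ) 1) :
    ((∑ i, x i ^ (Real.log ((m : ℝ) ^ 2 / (2 * m - 1)) / Real.log m)⁻¹) / (d : ℝ)) ^
        (Real.log ((m : ℝ) ^ 2 / (2 * m - 1)) / Real.log m) ≤
      (1 / (d : ℝ) ^ 2) * ∑ i, ∑ j, max (x i) (x j) := by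
  have hm1 : (1 : ℝ) < m := by exact_mod_cast hm
  have hbd : (m : ℝ)⁻¹ * d ≤ 1 := by
    rw [inv_mul_le_one₀ (by positivity)]
    exact_mod_cast hdm
  exact rpowMean_le_maxChoice (inv_pos.2 (zero_lt_one.trans hm1)) (inv_lt_one_of_one_lt₀ hm1)
    (inv_rpow_log_sq_div_log_eq hm1) hbd fun i => (hx i).1

/-- For integers `1 ≤ d ≤ m` (with `m ≥ 2`) and reals `x₁, …, x_d ∈ [0,1]`, the power mean
`M_{1/γ_m}(x₁,…,x_d) = ((x₁^{1/γ_m} + ⋯ + x_d^{1/γ_m})/d)^{γ_m}` is at most the max-choice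
average `(1/d²) ∑ᵢ ∑ⱼ max (xᵢ) (xⱼ)`, where `γ_m = log_m (m²/(2m-1))`. -/
theorem powerMean_le_maxChoice (m d : ℕ) (hm : 2 ≤ m) (hd : 1 ≤ d) (hdm : d ≤ m)
    (x : Fin d → ℝ) (hx : ∀ i, x i ∈ Set.Icc (0 : ℝ) 1) :
    ((∑ i, x i ^ (Real.log ((m : ℝ) ^ 2 / (2 * m - 1)) / Real.log m)⁻¹) / (d : ℝ)) ^
        (Real.log ((m : ℝ) ^ 2 / (2 * m - 1)) / Real.log m) ≤
      (1 / (d : ℝ) ^ 2) * ∑ i, ∑ j, max (x i) (x j) :=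
  powerMean_le_maxChoice_general m d hm hdm x hx
end

section
/- For any real x ∈ [0,1] and integer d ≥ 2, the function f(x) = ((d−1)/d · x^{1/γ_d} + 1/d)^{γ_d} is convex on [0,1], where γ_d = log_d(d²/(2d−1)). -/
/-!
With `p = 1/γ_d ≥ 1`, `f x = ‖(a^{1/p} x, b^{1/p})‖_p` for `x ≥ 0`, where `a = (d-1)/d`,
`b = 1/d` and `‖·‖_p` is the `ℓ^p` norm on `ℝ²`. A norm composed with an affine map is convex.
The only arithmetic input is `γ_d ∈ (0, 1]`, i.e. `1 < d²/(2d-1) ≤ d`.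
-/

open Real Set

theorem convexOn_mul_rpow_add_rpow_inv {p a b : ℝ} (hp : 1 ≤ p) (ha : 0 ≤ a) (hb : 0 ≤ b) :
    ConvexOn ℝ (Ici 0) fun x => (a * x ^ p + b) ^ p⁻¹ := by
  have hp0 : 0 < p := by linarith
  set q := ENNReal.ofReal p
  have : Fact (1 ≤ q) := ⟨ENNReal.one_le_ofReal.2 hp⟩
  have hq : q.toReal = p := ENNReal.toReal_ofReal hp0.le
  have hroot : ∀ c : ℝ, 0 ≤ c → (c ^ p⁻¹) ^ p = c := fun c hc => rpow_inv_rpow hc hp0.ne'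
  refine ((convexOn_norm convex_univ).comp_affineMap (AffineMap.lineMap
      (WithLp.toLp q ((0 : ℝ), b ^ p⁻¹)) (WithLp.toLp q (a ^ p⁻¹, b ^ p⁻¹)))).subset
      (subset_univ _) (convex_Ici 0) |>.congr fun x (hx : 0 ≤ x) => ?_
  simp only [Function.comp_apply, AffineMap.lineMap_apply_module', hq, hp0,
    WithLp.prod_norm_eq_add, WithLp.add_fst, WithLp.smul_fst, WithLp.sub_fst, WithLp.toLp_fst,
    sub_zero, smul_eq_mul, add_zero, norm_mul, norm_eq_abs, WithLp.add_snd, WithLp.smul_snd,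
    WithLp.sub_snd, WithLp.toLp_snd, sub_self, mul_zero, zero_add, one_div]
  rw [abs_of_nonneg hx, abs_of_nonneg (rpow_nonneg ha _), abs_of_nonneg (rpow_nonneg hb _),
    mul_rpow hx (rpow_nonneg ha _), hroot a ha, hroot b hb, mul_comm]

theorem log_sq_div_two_mul_sub_one_div_log_mem_Ioc {d : ℝ} (hd : 1 < d) :
    log (d ^ 2 / (2 * d - 1)) / log d ∈ Ioc 0 1 := by
  have hden : 0 < 2 * d - 1 := by linarith
  have hlog : 0 < log d := log_pos hd
  have hlower : 1 < d ^ 2 / (2 * d - 1) := by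
    rw [lt_div_iff₀ hden]
    nlinarith
  have hupper : d ^ 2 / (2 * d - 1) ≤ d := by
    rw [div_le_iff₀ hden]
    nlinarith
  exact ⟨div_pos (log_pos hlower) hlog,
    (div_le_one hlog).2 (log_le_log (by linarith) hupper)⟩

/-- For any integer `d ≥ 2`, the function `f(x) = ((d-1)/d · x^{1/γ_d} + 1/d)^{γ_d}` is convex
on `[0,1]`, where `γ_d = log_d (d²/(2d-1))`. -/
theorem powerMean_convexOn (d : ℕ) (hd : 2 ≤ d) :
    ConvexOn ℝ (Set.Icc (0 : ℝ) 1)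
      (fun x : ℝ =>
        (((d : ℝ) - 1) / d * x ^ (Real.log ((d : ℝ) ^ 2 / (2 * d - 1)) / Real.log d)⁻¹ +
            1 / d) ^ (Real.log ((d : ℝ) ^ 2 / (2 * d - 1)) / Real.log d)) := by
  have hd1 : (1 : ℝ) < d := by exact_mod_cast hd
  obtain ⟨hγ0, hγ1⟩ := log_sq_div_two_mul_sub_one_div_log_mem_Ioc hd1
  have hf := convexOn_mul_rpow_add_rpow_inv ((one_le_inv₀ hγ0).2 hγ1)
    (div_nonneg (sub_nonneg.2 hd1.le) (by positivity) : (0 : ℝ) ≤ (d - 1) / d)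
    (by positivity : (0 : ℝ) ≤ 1 / d)
  rw [inv_inv] at hf
  exact hf.subset Icc_subset_Ici_self (convex_Icc 0 1)
end

section
/- Let G be a connected finite graph with maximum degree 3, and let uv be an edge. Then there is a choice-random-walk strategy under which the expected time to reach v starting from u is at most 9. Consequently, if G has n vertices, the choice-random-walk cover time from any start vertex is at most 18n − 27. -/
open scoped ENNReal

/-- `qv` is a one-step transition distribution of the choice random walk at vertex `v`:
there are pairwise preference probabilities `α i j ∈ [0,1]` (with `α j i = 1 - α i j`) for
the neighbours of `v`, and the probability of stepping to a neighbour `i` is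
`2 (∑_{j ∈ Γ(v)} α i j) / deg(v)²` (two uniform neighbours are offered independently with
replacement, and `i` is chosen over `j` with probability `α i j`). -/
def IsCRWStep {V : Type*} [Fintype V] [DecidableEq V] (G : SimpleGraph V)
    [DecidableRel G.Adj] (v : V) (qv : V → ℝ) : Prop :=
  ∃ α : V → V → ℝ,
    (∀ i ∈ G.neighborFinset v, ∀ j ∈ G.neighborFinset v,
      0 ≤ α i j ∧ α i j ≤ 1 ∧ α j i = 1 - α i j) ∧
    ∀ i, qv i = if i ∈ G.neighborFinset v then
      (2 * ∑ j ∈ G.neighborFinset v, α i j) / ((G.degree v : ℝ)) ^ 2 else 0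

/-- The optimal expected time for the choice random walk started at `u` to reach the set
`S`, defined as the least value `h u` over all systems of expected-hitting-time values
`h : V → ℝ≥0∞` solving the one-step (Bellman) equations for some choice strategy. -/
noncomputable def crwHitTime {V : Type*} [Fintype V] [DecidableEq V] (G : SimpleGraph V)
    [DecidableRel G.Adj] (u : V) (S : Set V) : ℝ≥0∞ :=
  sInf {x : ℝ≥0∞ | ∃ h : V → ℝ≥0∞, x = h u ∧ (∀ v ∈ S, h v = 0) ∧
    ∀ v ∉ S, ∃ qv : V → ℝ, IsCRWStep G v qv ∧
      h v = 1 + ∑ w, ENNReal.ofReal (qv w) * h w}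

/-- The optimal expected time for the choice random walk started at `u` to visit every
vertex of `G`, defined via the Bellman equations on states `(current vertex, covered set)`:
the controller may use any choice strategy depending on the covered set. -/
noncomputable def crwCoverTime {V : Type*} [Fintype V] [DecidableEq V] (G : SimpleGraph V)
    [DecidableRel G.Adj] (u : V) : ℝ≥0∞ :=
  sInf {x : ℝ≥0∞ | ∃ h : V → Finset V → ℝ≥0∞, x = h u {u} ∧
    (∀ v, h v Finset.univ = 0) ∧
    ∀ v (X : Finset V), X ≠ Finset.univ → ∃ qv : V → ℝ, IsCRWStep G v qv ∧
      h v X = 1 + ∑ w, ENNReal.ofReal (qv w) * h w (insert w X)}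

/-!
At a vertex of degree `d ≤ 3` the controller can move to a prescribed neighbour with probability
`(2d - 1) / d² ≥ 5/9`. Moving towards `v` this way lowers the expected distance to `v` by at
least `2 · 5/9 - 1 = 1/9`, so `9 · dist(·, v)` is a supersolution of the Bellman equations for
hitting `v`, and a supersolution dominates the least solution (the least fixed point of the
monotone Bellman operator). For covering, the vertices are hit in the order of a walk through
all of them of length `m ≤ 2n - 3` (a closed spanning walk built by splicing in excursions, less
its first edge); `9 · (distance to the next target + remaining length of the walk)` is then a
supersolution, and gives `9m ≤ 18n - 27`.
-/

open Finset

section Bellman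

variable {σ ι : Type*} [Fintype ι]

open Classical in
noncomputable def bellmanOp (A : Set σ) (c : σ → ι → ℝ≥0∞) (T : σ → ι → σ) :
    (σ → ℝ≥0∞) →o (σ → ℝ≥0∞) where
  toFun h s := if s ∈ A then 0 else 1 + ∑ i, c s i * h (T s i)
  monotone' h₁ h₂ hh s := by
    dsimp only
    split_ifs
    · exact le_rfl
    · gcongr with i
      exact hh _

open Classical in
theorem bellmanOp_apply (A : Set σ) (c : σ → ι → ℝ≥0∞) (T : σ → ι → σ) (h : σ → ℝ≥0∞) (s : σ) :
    bellmanOp A c T h s = if s ∈ A then 0 else 1 + ∑ i, c s i * h (T s i) :=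
  rfl

theorem exists_bellman_solution_le (A : Set σ) (c : σ → ι → ℝ≥0∞) (T : σ → ι → σ)
    (Φ : σ → ℝ≥0∞) (hΦ : ∀ s ∉ A, 1 + ∑ i, c s i * Φ (T s i) ≤ Φ s) :
    ∃ h : σ → ℝ≥0∞, (∀ s ∈ A, h s = 0) ∧
      (∀ s ∉ A, h s = 1 + ∑ i, c s i * h (T s i)) ∧ h ≤ Φ := by
  set F := bellmanOp A c T
  have hfix (s : σ) : F.lfp s = F F.lfp s := (congrFun F.map_lfp s).symm
  refine ⟨F.lfp, fun s hs => ?_, fun s hs => ?_, F.lfp_le fun s => ?_⟩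
  · rw [hfix, bellmanOp_apply, if_pos hs]
  · rw [hfix, bellmanOp_apply, if_neg hs]
  · rw [bellmanOp_apply]
    split_ifs with hs
    exacts [zero_le, hΦ s hs]

theorem one_add_sum_ofReal_mul_ofReal {q f : ι → ℝ} (hq : ∀ i, 0 ≤ q i) (hf : ∀ i, 0 ≤ f i) :
    1 + ∑ i, ENNReal.ofReal (q i) * ENNReal.ofReal (f i) =
      ENNReal.ofReal (1 + ∑ i, q i * f i) := by
  have hqf (i : ι) : 0 ≤ q i * f i := mul_nonneg (hq i) (hf i)
  simp_rw [← ENNReal.ofReal_mul (hq _)]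
  rw [ENNReal.ofReal_add zero_le_one (sum_nonneg fun i _ => hqf i), ENNReal.ofReal_one,
    ENNReal.ofReal_sum_of_nonneg fun i _ => hqf i]

theorem exists_bellman_solution_le_ofReal (A : Set σ) (T : σ → ι → σ)
    (P : σ → (ι → ℝ) → Prop) (hP : ∀ s q, P s q → ∀ i, 0 ≤ q i) (Φ : σ → ℝ)
    (hΦ₀ : ∀ s, 0 ≤ Φ s) (hΦ : ∀ s ∉ A, ∃ q, P s q ∧ 1 + ∑ i, q i * Φ (T s i) ≤ Φ s) :
    ∃ h : σ → ℝ≥0∞, (∀ s ∈ A, h s = 0) ∧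
      (∀ s ∉ A, ∃ q, P s q ∧ h s = 1 + ∑ i, ENNReal.ofReal (q i) * h (T s i)) ∧
      ∀ s, h s ≤ ENNReal.ofReal (Φ s) := by
  classical
  choose q hqP hqΦ using hΦ
  set c : σ → ι → ℝ≥0∞ := fun s i => if hs : s ∈ A then 0 else ENNReal.ofReal (q s hs i)
  obtain ⟨h, h₀, heq, hle⟩ := exists_bellman_solution_le A c T (fun s => ENNReal.ofReal (Φ s))
    fun s hs => by
      simpa only [c, dif_neg hs, one_add_sum_ofReal_mul_ofReal (hP s _ (hqP s hs)) (hΦ₀ <| T s ·)]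
        using ENNReal.ofReal_le_ofReal (hqΦ s hs)
  exact ⟨h, h₀, fun s hs => ⟨q s hs, hqP s hs, by simpa only [c, dif_neg hs] using heq s hs⟩, hle⟩

end Bellman

namespace IsCRWStep

variable {V : Type*} [Fintype V] [DecidableEq V] {G : SimpleGraph V} [DecidableRel G.Adj]
  {v : V} {q : V → ℝ}

theorem nonneg (hq : IsCRWStep G v q) (w : V) : 0 ≤ q w := by
  obtain ⟨α, hα, hq⟩ := hq
  rw [hq w]
  split_ifs with hw
  · exact div_nonneg (mul_nonneg zero_le_two (sum_nonneg fun j hj => (hα w hw j hj).1))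
      (sq_nonneg _)
  · exact le_rfl

theorem eq_zero_of_not_adj (hq : IsCRWStep G v q) {w : V} (hw : ¬ G.Adj v w) : q w = 0 := by
  obtain ⟨α, -, hq⟩ := hq
  rw [hq w, if_neg (by simpa using hw)]

/-- Summing the antisymmetry `α j i = 1 - α i j` over all pairs of neighbours shows that the
preferences add up to `deg(v)² / 2`. -/
theorem sum_eq_one (hq : IsCRWStep G v q) (hv : 0 < G.degree v) : ∑ w, q w = 1 := by
  obtain ⟨α, hα, hq⟩ := hq
  set N := G.neighborFinset v
  have hN : #N = G.degree v := G.card_neighborFinset_eq_degree v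
  have hsum : ∑ i ∈ N, ∑ j ∈ N, α i j = (G.degree v : ℝ) ^ 2 / 2 := by
    have hswap : ∑ i ∈ N, ∑ j ∈ N, α i j = ∑ i ∈ N, ∑ j ∈ N, (1 - α i j) := by
      rw [sum_comm]
      exact sum_congr rfl fun i hi => sum_congr rfl fun j hj => (hα i hi j hj).2.2
    simp only [sum_sub_distrib, sum_const, hN, nsmul_eq_mul, mul_one] at hswap
    linarith
  have hd : (G.degree v : ℝ) ≠ 0 := by positivity
  simp_rw [hq, sum_ite_mem, univ_inter, ← sum_div, ← mul_sum, hsum]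
  field_simp

theorem sum_le_one (hq : IsCRWStep G v q) : ∑ w, q w ≤ 1 := by
  rcases (G.degree v).eq_zero_or_pos with hv | hv
  · have hN : G.neighborFinset v = ∅ := by
      rw [← card_eq_zero, G.card_neighborFinset_eq_degree, hv]
    have (w : V) : ¬ G.Adj v w := by simp [← G.mem_neighborFinset, hN]
    simp [hq.eq_zero_of_not_adj (this _)]
  · exact (hq.sum_eq_one hv).le

theorem sum_mul_le_sum_mul (hq : IsCRWStep G v q) {f g : V → ℝ}
    (hfg : ∀ w, G.Adj v w → f w ≤ g w) : ∑ w, q w * f w ≤ ∑ w, q w * g w := by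
  refine sum_le_sum fun w _ => ?_
  by_cases hw : G.Adj v w
  · exact mul_le_mul_of_nonneg_left (hfg w hw) (hq.nonneg w)
  · simp [hq.eq_zero_of_not_adj hw]

theorem one_add_sum_mul_le (hq : IsCRWStep G v q) {f : V → ℝ} {C : ℝ} (hC : 0 ≤ C)
    (hf : ∀ w, G.Adj v w → f w ≤ C) : 1 + ∑ w, q w * f w ≤ 1 + C := by
  have := hq.sum_mul_le_sum_mul hf
  rw [← sum_mul] at this
  nlinarith [hq.sum_le_one]

end IsCRWStep

theorem crwHitTime_le_ofReal {V : Type*} [Fintype V] [DecidableEq V] (G : SimpleGraph V)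
    [DecidableRel G.Adj] (S : Set V) (Φ : V → ℝ) (hΦ₀ : ∀ v, 0 ≤ Φ v)
    (hΦ : ∀ v ∉ S, ∃ q, IsCRWStep G v q ∧ 1 + ∑ w, q w * Φ w ≤ Φ v) (u : V) :
    crwHitTime G u S ≤ ENNReal.ofReal (Φ u) := by
  obtain ⟨h, h₀, heq, hle⟩ := exists_bellman_solution_le_ofReal S (fun _ w => w) (IsCRWStep G)
    (fun _ _ hq => hq.nonneg) Φ hΦ₀ hΦ
  exact sInf_le_of_le ⟨h, rfl, h₀, heq⟩ (hle u)

theorem crwCoverTime_le_ofReal {V : Type*} [Fintype V] [DecidableEq V] (G : SimpleGraph V)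
    [DecidableRel G.Adj] (Φ : V → Finset V → ℝ) (hΦ₀ : ∀ v X, 0 ≤ Φ v X)
    (hΦ : ∀ v (X : Finset V), X ≠ univ →
      ∃ q, IsCRWStep G v q ∧ 1 + ∑ w, q w * Φ w (insert w X) ≤ Φ v X) (u : V) :
    crwCoverTime G u ≤ ENNReal.ofReal (Φ u {u}) := by
  obtain ⟨h, h₀, heq, hle⟩ := exists_bellman_solution_le_ofReal
    {s : V × Finset V | s.2 = univ} (fun s w => (w, insert w s.2)) (fun s => IsCRWStep G s.1)
    (fun _ _ hq => hq.nonneg) (fun s => Φ s.1 s.2) (fun _ => hΦ₀ _ _) (fun s hs => hΦ s.1 s.2 hs)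
  exact sInf_le_of_le ⟨fun v X => h (v, X), rfl, fun v => h₀ (v, univ) rfl,
    fun v X hX => heq (v, X) hX⟩ (hle (u, {u}))

section Preference

variable {V : Type*} [Fintype V] [DecidableEq V] (G : SimpleGraph V) [DecidableRel G.Adj]

noncomputable def crwStep (v : V) (α : V → V → ℝ) (i : V) : ℝ :=
  if i ∈ G.neighborFinset v then
    (2 * ∑ j ∈ G.neighborFinset v, α i j) / ((G.degree v : ℝ)) ^ 2 else 0

/-- Always choose `p` when it is offered, and choose uniformly between two other offers. -/
noncomputable def preferring (p : V) (i j : V) : ℝ :=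
  (1 + (if i = p then 1 else 0) - (if j = p then 1 else 0)) / 2

variable {G}

theorem isCRWStep_crwStep_preferring (v p : V) :
    IsCRWStep G v (crwStep G v (preferring p)) :=
  ⟨preferring p, fun i _ j _ => by unfold preferring; split_ifs <;> norm_num, fun _ => rfl⟩

theorem crwStep_preferring_self {v p : V} (hvp : G.Adj v p) :
    crwStep G v (preferring p) p = (2 * G.degree v - 1) / (G.degree v : ℝ) ^ 2 := by
  have hp : p ∈ G.neighborFinset v := (G.mem_neighborFinset v p).mpr hvp
  simp only [crwStep, preferring, if_pos hp, ← sum_div, sum_sub_distrib, sum_const,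
    sum_ite_eq', G.card_neighborFinset_eq_degree, nsmul_eq_mul, if_true]
  ring

theorem five_div_nine_le_crwStep_preferring {v p : V} (hv : G.degree v ≤ 3)
    (hvp : G.Adj v p) : 5 / 9 ≤ crwStep G v (preferring p) p := by
  have hpos : 0 < G.degree v := G.degree_pos_iff_exists_adj v |>.mpr ⟨p, hvp⟩
  rw [crwStep_preferring_self hvp, le_div_iff₀ (by positivity)]
  interval_cases G.degree v <;> norm_num

end Preference

theorem SimpleGraph.Reachable.exists_adj_dist_lt {V : Type*} {G : SimpleGraph V} {v t : V}
    (h : G.Reachable v t) (hne : v ≠ t) : ∃ p, G.Adj v p ∧ G.dist p t < G.dist v t := by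
  obtain ⟨W, hW⟩ := h.exists_walk_length_eq_dist
  have hW₀ : ¬ W.Nil := SimpleGraph.Walk.not_nil_of_ne hne
  refine ⟨W.snd, W.adj_snd hW₀, ?_⟩
  have := SimpleGraph.dist_le W.tail
  have := W.length_tail_add_one hW₀
  omega

theorem exists_isCRWStep_drift {V : Type*} [Fintype V] [DecidableEq V] {G : SimpleGraph V}
    [DecidableRel G.Adj] {v t : V} (hv : G.degree v ≤ 3) (hvt : G.Reachable v t)
    (hne : v ≠ t) :
    ∃ q, IsCRWStep G v q ∧ ∀ (Ψ : V → ℝ) (B : ℝ),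
      (∀ x, G.Adj v x → Ψ x ≤ 9 * G.dist x t + B) → 1 + ∑ w, q w * Ψ w ≤ 9 * G.dist v t + B := by
  obtain ⟨p, hvp, hpt⟩ := hvt.exists_adj_dist_lt hne
  have hq := isCRWStep_crwStep_preferring (G := G) v p
  refine ⟨_, hq, fun Ψ B hΨ => ?_⟩
  set q := crwStep G v (preferring p)
  set M := 9 * (G.dist v t : ℝ) + B
  have hbound (x : V) (hx : G.Adj v x) : Ψ x ≤ M + 9 - if x = p then 18 else 0 := by
    have hΨx := hΨ x hx
    split_ifs with hxp
    · subst hxp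
      have : (G.dist x t : ℝ) + 1 ≤ G.dist v t := by exact_mod_cast hpt
      linarith
    · have : G.dist x t ≤ G.dist x v + G.dist v t := hx.symm.reachable.dist_triangle_left t
      rw [SimpleGraph.dist_eq_one_iff_adj.mpr hx.symm] at this
      have : (G.dist x t : ℝ) ≤ G.dist v t + 1 := by exact_mod_cast this.trans_eq (add_comm _ _)
      linarith
  have hsum := hq.sum_eq_one (G.degree_pos_iff_exists_adj v |>.mpr ⟨p, hvp⟩)
  calc 1 + ∑ w, q w * Ψ w ≤ 1 + ∑ w, q w * (M + 9 - if w = p then 18 else 0) := by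
        gcongr 1 + ?_
        exact hq.sum_mul_le_sum_mul hbound
    _ = 1 + (M + 9) - 18 * q p := by
        simp only [mul_sub, sum_sub_distrib, ← sum_mul, hsum, mul_ite, mul_zero, sum_ite_eq',
          mem_univ, if_true]
        ring
    _ ≤ M := by linarith [five_div_nine_le_crwStep_preferring hv hvp]

theorem crwHitTime_le_nine_mul_dist {V : Type*} [Fintype V] [DecidableEq V]
    {G : SimpleGraph V} [DecidableRel G.Adj] (hconn : G.Connected)
    (hdeg : ∀ v, G.degree v ≤ 3) (u v : V) :
    crwHitTime G u {v} ≤ ENNReal.ofReal (9 * G.dist u v) := by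
  refine crwHitTime_le_ofReal G {v} (fun x => 9 * G.dist x v) (fun _ => by positivity)
    (fun x hx => ?_) u
  obtain ⟨q, hq, hdrift⟩ := exists_isCRWStep_drift (hdeg x) (hconn x v) hx
  exact ⟨q, hq, by simpa using hdrift (fun y => 9 * G.dist y v) 0 (fun y _ => by simp)⟩

namespace SimpleGraph.Walk

variable {V : Type*} {G : SimpleGraph V} {u z : V}

theorem dist_getVert_le (W : G.Walk u z) {a b : ℕ} (hab : a ≤ b) :
    G.dist (W.getVert a) (W.getVert b) ≤ b - a := by
  have h := SimpleGraph.dist_le ((W.drop a).take (b - a))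
  rw [take_length, drop_getVert, Nat.add_sub_cancel' hab] at h
  exact h.trans (min_le_left _ _)

theorem preconnected_of_forall_mem_support {W : G.Walk u z} (hW : ∀ x, x ∈ W.support) :
    G.Preconnected := by
  classical
  have hu (x : V) : G.Reachable u x := (W.takeUntil x (hW x)).reachable
  exact fun x y => (hu x).symm.trans (hu y)

variable [Fintype V] {W : G.Walk u z}

variable (W) in
/-- Junk value `0` if the walk never leaves `X`. -/
noncomputable def firstIndexNotMem (X : Finset V) : ℕ :=
  sInf {j | W.getVert j ∉ X}

theorem exists_getVert_notMem (hW : ∀ x, x ∈ W.support) {X : Finset V}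
    (hX : X ≠ Finset.univ) : ∃ j ≤ W.length, W.getVert j ∉ X := by
  obtain ⟨x, hx⟩ : ∃ x, x ∉ X := by simpa [Finset.eq_univ_iff_forall] using hX
  obtain ⟨j, rfl, hj⟩ := mem_support_iff_exists_getVert.mp (hW x)
  exact ⟨j, hj, hx⟩

theorem getVert_firstIndexNotMem_notMem (hW : ∀ x, x ∈ W.support) {X : Finset V}
    (hX : X ≠ Finset.univ) : W.getVert (W.firstIndexNotMem X) ∉ X := by
  obtain ⟨j, -, hj⟩ := exists_getVert_notMem hW hX
  exact Nat.sInf_mem (s := {j | W.getVert j ∉ X}) ⟨j, hj⟩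

theorem firstIndexNotMem_le_length (hW : ∀ x, x ∈ W.support) {X : Finset V}
    (hX : X ≠ Finset.univ) : W.firstIndexNotMem X ≤ W.length :=
  have ⟨_, hjW, hj⟩ := exists_getVert_notMem hW hX
  (Nat.sInf_le hj).trans hjW

theorem firstIndexNotMem_mono (hW : ∀ x, x ∈ W.support) {X Y : Finset V} (hXY : X ⊆ Y)
    (hY : Y ≠ Finset.univ) : W.firstIndexNotMem X ≤ W.firstIndexNotMem Y :=
  Nat.sInf_le fun h => getVert_firstIndexNotMem_notMem hW hY (hXY h)

end SimpleGraph.Walk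

section Cover

open SimpleGraph Walk

variable {V : Type*} [Fintype V] [DecidableEq V] {G : SimpleGraph V} {u z : V} {W : G.Walk u z}

variable (W) in
/-- Bounds the expected remaining cover time from `x` with visited set `X` when the vertices are
hit in the order in which `W` meets them: `9` per unit of distance to the next target (the first
vertex of `W` outside `X`) and per remaining step of `W`. The `10` pays for the states sitting on
the target itself: they are unreachable, but the Bellman equations are imposed there too. -/
noncomputable def coverPotential (x : V) (X : Finset V) : ℝ :=
  if X = univ then 0 else
    9 * G.dist x (W.getVert (W.firstIndexNotMem X)) + 9 * (W.length - W.firstIndexNotMem X : ℝ) +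
      if x = W.getVert (W.firstIndexNotMem X) then 10 else 0

theorem coverPotential_nonneg (hW : ∀ x, x ∈ W.support) (x : V) (X : Finset V) :
    0 ≤ coverPotential W x X := by
  unfold coverPotential
  split_ifs with hX
  · exact le_rfl
  all_goals
    have : (W.firstIndexNotMem X : ℝ) ≤ W.length := by
      exact_mod_cast firstIndexNotMem_le_length hW hX
    positivity

theorem coverPotential_insert_le (hW : ∀ x, x ∈ W.support) {X : Finset V} (hX : X ≠ univ)
    (y : V) :
    coverPotential W y (insert y X) ≤
      9 * G.dist y (W.getVert (W.firstIndexNotMem X)) +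
        9 * (W.length - W.firstIndexNotMem X : ℝ) := by
  set k := W.firstIndexNotMem X
  set k' := W.firstIndexNotMem (insert y X)
  have hkL : (k : ℝ) ≤ W.length := by exact_mod_cast firstIndexNotMem_le_length hW hX
  unfold coverPotential
  split_ifs with hY hy
  · positivity
  · exact absurd (hy ▸ mem_insert_self y X) (getVert_firstIndexNotMem_notMem hW hY)
  · have hkk' : k ≤ k' := firstIndexNotMem_mono hW (subset_insert y X) hY
    have hk'L : (k' : ℝ) ≤ W.length := by exact_mod_cast firstIndexNotMem_le_length hW hY
    have hdist : G.dist y (W.getVert k') ≤ G.dist y (W.getVert k) + (k' - k) :=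
      ((preconnected_of_forall_mem_support hW _ _).dist_triangle_right y).trans
        (Nat.add_le_add_left (W.dist_getVert_le hkk') _)
    have : (G.dist y (W.getVert k') : ℝ) ≤ G.dist y (W.getVert k) + (k' - k) := by
      rw [← Nat.cast_sub hkk']
      exact_mod_cast hdist
    linarith

theorem exists_isCRWStep_coverPotential [DecidableRel G.Adj] (hdeg : ∀ v, G.degree v ≤ 3)
    (hW : ∀ x, x ∈ W.support) {X : Finset V} (hX : X ≠ univ) (v : V) :
    ∃ q, IsCRWStep G v q ∧
      1 + ∑ w, q w * coverPotential W w (insert w X) ≤ coverPotential W v X := by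
  set t := W.getVert (W.firstIndexNotMem X)
  set B := 9 * (W.length - W.firstIndexNotMem X : ℝ)
  have hB : 0 ≤ B := by
    have : (W.firstIndexNotMem X : ℝ) ≤ W.length := by
      exact_mod_cast firstIndexNotMem_le_length hW hX
    positivity
  have hΦv : coverPotential W v X = 9 * G.dist v t + B + if v = t then 10 else 0 := by
    simp only [coverPotential, if_neg hX, t, B]
  by_cases hvt : v = t
  · refine ⟨_, isCRWStep_crwStep_preferring v v, ?_⟩
    refine ((isCRWStep_crwStep_preferring v v).one_add_sum_mul_le (C := 9 + B) (by positivity)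
      fun w hw => (coverPotential_insert_le hW hX w).trans_eq ?_).trans_eq ?_
    · change 9 * (G.dist w t : ℝ) + B = 9 + B
      rw [dist_comm, ← hvt, dist_eq_one_iff_adj.mpr hw, Nat.cast_one, mul_one]
    · rw [hΦv, if_pos hvt, hvt, SimpleGraph.dist_self, Nat.cast_zero]
      ring
  · obtain ⟨q, hq, hdrift⟩ :=
      exists_isCRWStep_drift (hdeg v) (preconnected_of_forall_mem_support hW v t) hvt
    refine ⟨q, hq, ?_⟩
    rw [hΦv, if_neg hvt, add_zero]
    exact hdrift _ B fun w _ => coverPotential_insert_le hW hX w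

theorem coverPotential_start_le (hW : ∀ x, x ∈ W.support) :
    coverPotential W u {u} ≤ 9 * W.length := by
  unfold coverPotential
  split_ifs with hX hu
  · positivity
  · exact absurd (hu ▸ mem_singleton_self u) (getVert_firstIndexNotMem_notMem hW hX)
  · have hdist := W.dist_getVert_le (Nat.zero_le (W.firstIndexNotMem {u}))
    rw [getVert_zero, Nat.sub_zero] at hdist
    have : (G.dist u (W.getVert (W.firstIndexNotMem {u})) : ℝ) ≤ W.firstIndexNotMem {u} := by
      exact_mod_cast hdist
    linarith

theorem crwCoverTime_le_nine_mul_length [DecidableRel G.Adj] (hdeg : ∀ v, G.degree v ≤ 3)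
    (hW : ∀ x, x ∈ W.support) : crwCoverTime G u ≤ ENNReal.ofReal (9 * W.length) :=
  (crwCoverTime_le_ofReal G (coverPotential W) (coverPotential_nonneg hW)
    (fun v _ hX => exists_isCRWStep_coverPotential hdeg hW hX v) u).trans
    (ENNReal.ofReal_le_ofReal (coverPotential_start_le hW))

end Cover

namespace SimpleGraph.Connected

open Walk

variable {V : Type*} [Fintype V] [DecidableEq V] {G : SimpleGraph V}

/-- Splice an excursion `p → y → p` into `W`, where `p` is on `W` and `y` is a neighbour of `p`
off `W`. -/
theorem exists_walk_length_eq_add_two (hconn : G.Connected) {u w : V} (W : G.Walk u w)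
    (hW : W.support.toFinset ≠ univ) :
    ∃ W' : G.Walk u w, W'.length = W.length + 2 ∧ #W.support.toFinset < #W'.support.toFinset := by
  obtain ⟨x, hx⟩ : ∃ x, x ∉ W.support := by simpa [eq_univ_iff_forall] using hW
  obtain ⟨⟨⟨p, y⟩, hpy⟩, -, hp, hy⟩ :=
    (hconn u x).some.exists_boundary_dart {v | v ∈ W.support} W.start_mem_support hx
  simp only [Set.mem_ofPred_eq] at hp hy
  set W' := (W.takeUntil p hp).append (cons hpy (cons hpy.symm (W.dropUntil p hp)))
  have hsplit := W.take_spec hp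
  refine ⟨W', ?_, card_lt_card ⟨fun v hv => ?_, fun h => hy ?_⟩⟩
  · rw [← hsplit]
    simp only [W', length_append, length_cons]
    ring
  · rw [← hsplit, List.mem_toFinset, mem_support_append_iff] at hv
    simp only [W', List.mem_toFinset, mem_support_append_iff, support_cons, List.mem_cons]
    tauto
  · simpa [W'] using h (by simp [W'] : y ∈ W'.support.toFinset)

theorem exists_closedWalk_length_le_two_mul (hconn : G.Connected) (u : V) (k : ℕ) :
    ∃ W : G.Walk u u, min (k + 1) (Fintype.card V) ≤ #W.support.toFinset ∧ W.length ≤ 2 * k := by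
  induction k with
  | zero => exact ⟨nil, by simp, le_rfl⟩
  | succ k ih =>
    obtain ⟨W, hcard, hlen⟩ := ih
    by_cases hW : W.support.toFinset = univ
    · exact ⟨W, by simp [hW], by omega⟩
    · obtain ⟨W', hlen', hcard'⟩ := hconn.exists_walk_length_eq_add_two W hW
      exact ⟨W', by omega, by omega⟩

theorem exists_walk_forall_mem_support_length_le (hconn : G.Connected) (u : V) :
    ∃ (z : V) (W : G.Walk u z), (∀ x, x ∈ W.support) ∧ W.length ≤ 2 * Fintype.card V - 3 := by
  have hn : 0 < Fintype.card V := Fintype.card_pos_iff.mpr ⟨u⟩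
  obtain ⟨W, hcard, hlen⟩ := hconn.exists_closedWalk_length_le_two_mul u (Fintype.card V - 1)
  have hW (x : V) : x ∈ W.support := by
    have : #W.support.toFinset ≤ Fintype.card V := card_le_univ _
    rw [← List.mem_toFinset, eq_univ_of_card W.support.toFinset (by omega)]
    exact mem_univ x
  cases W with
  | nil => exact ⟨u, nil, hW, by simp⟩
  | cons h W' =>
    refine ⟨_, W'.reverse, fun x => ?_, by simp at hlen ⊢; omega⟩
    have := hW x
    rw [support_cons, List.mem_cons] at this
    rcases this with rfl | hx
    · simp
    · simpa using hx

end SimpleGraph.Connected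

/-- Let `G` be a connected finite graph with maximum degree `3`.  Then for every edge `uv`
there is a choice-random-walk strategy reaching `v` from `u` in expected time at most `9`,
and consequently, if `G` has `n` vertices, the choice-random-walk cover time from any start
vertex is at most `18n - 27`. -/
theorem subcubic_crw_hit_and_cover {V : Type*} [Fintype V] [DecidableEq V]
    (G : SimpleGraph V) [DecidableRel G.Adj] (hconn : G.Connected)
    (hdeg : ∀ v, G.degree v ≤ 3) :
    (∀ u v : V, G.Adj u v → crwHitTime G u {v} ≤ 9) ∧
    (∀ u : V, crwCoverTime G u ≤ ENNReal.ofReal (18 * (Fintype.card V : ℝ) - 27)) := by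
  refine ⟨fun u v huv => ?_, fun u => ?_⟩
  · simpa [SimpleGraph.dist_eq_one_iff_adj.mpr huv] using
      crwHitTime_le_nine_mul_dist hconn hdeg u v
  · obtain ⟨z, W, hW, hlen⟩ := hconn.exists_walk_forall_mem_support_length_le u
    refine (crwCoverTime_le_nine_mul_length hdeg hW).trans
      (ENNReal.ofReal_le_ofReal_iff'.mpr ?_)
    rcases W.length.eq_zero_or_pos with h₀ | hpos
    · exact Or.inr (by simp [h₀])
    · have : (W.length : ℝ) + 3 ≤ 2 * Fintype.card V := by exact_mod_cast (by omega)
      exact Or.inl (by linarith)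
end

section
/- Let (G,w) be a finite connected weighted graph and let x be a vertex such that every edge incident with x has weight 1. Then for any vertex y adjacent to x, the hitting time of x from y for the weighted random walk satisfies H_y(x) ≤ 2·w(G) − d(x) = w(G) + w(G∖x), where w(G) is the total edge weight and d(x) the degree of x. -/
open scoped ENNReal

/-- The expected hitting time of `x` from `y` for the random walk on the weighted graph
`(G, w)` (moving from `v` to `z` with probability `w v z / ∑_{z'} w v z'`), defined as the
least value `h y` over all systems of values `h : V → ℝ≥0∞` solving the one-step
equations. -/
noncomputable def weightedHitTime {V : Type*} [Fintype V] [DecidableEq V]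
    (G : SimpleGraph V) [DecidableRel G.Adj] (w : V → V → ℝ) (y x : V) : ℝ≥0∞ :=
  sInf {r : ℝ≥0∞ | ∃ h : V → ℝ≥0∞, r = h y ∧ h x = 0 ∧
    ∀ v, v ≠ x → h v = 1 + ∑ z, ENNReal.ofReal (w v z / ∑ z', w v z') * h z}

lemma exists_adj_of_conn {V : Type*} [Fintype V] (G : SimpleGraph V) (hconn : G.Connected)
    {a b : V} (hab : a ≠ b) (v : V) : ∃ u, G.Adj v u := by
  obtain ⟨u, huv⟩ : ∃ u, u ≠ v := by
    rcases eq_or_ne a v with rfl | h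
    · exact ⟨b, hab.symm⟩
    · exact ⟨a, h⟩
  obtain ⟨p⟩ := hconn.preconnected v u
  cases p with
  | nil => exact absurd rfl huv
  | cons hadj _ => exact ⟨_, hadj⟩

lemma harmonic_nonpos {V : Type*} [Fintype V] [DecidableEq V]
    (G : SimpleGraph V) [DecidableRel G.Adj] (hconn : G.Connected)
    (w : V → V → ℝ)
    (hnn : ∀ u v, 0 ≤ w u v)
    (hpos : ∀ u v, G.Adj u v → 0 < w u v)
    (hdpos : ∀ v, (0:ℝ) < ∑ z, w v z)
    (x : V) (f : V → ℝ) (hfx : f x = 0)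
    (hf : ∀ v, v ≠ x → f v = ∑ z, w v z / (∑ z', w v z') * f z) :
    ∀ v, f v ≤ 0 := by
  obtain ⟨v0, -, hv0⟩ := Finset.exists_max_image Finset.univ f ⟨x, Finset.mem_univ x⟩
  have hmax : ∀ v, f v ≤ f v0 := fun v => hv0 v (Finset.mem_univ v)
  suffices h : f v0 ≤ 0 from fun v => le_trans (hmax v) h
  obtain ⟨p⟩ := hconn.preconnected v0 x
  have key : ∀ (v c : V) (_ : G.Walk v c), f c = 0 →
      (∀ u, u ≠ c → f u = ∑ z, w u z / (∑ z', w u z') * f z) →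
      f v = f v0 → f v0 ≤ 0 := by
    intro v c p
    induction p with
    | nil =>
      intro h0 _ hfv
      rw [h0] at hfv
      exact hfv.symm.le
    | @cons a b c hadj q ih =>
      intro h0 hharm hfv
      by_cases hac : a = c
      · rw [hac, h0] at hfv; exact hfv.symm.le
      · refine ih h0 hharm ?_
        by_contra hne
        have hb_lt : f b < f v0 := lt_of_le_of_ne (hmax b) hne
        have hlt : ∑ z, w a z / (∑ z', w a z') * f z
            < ∑ z, w a z / (∑ z', w a z') * f v0 := by
          apply Finset.sum_lt_sum
          · intro i _
            exact mul_le_mul_of_nonneg_left (hmax i)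
              (div_nonneg (hnn a i) (hdpos a).le)
          · exact ⟨b, Finset.mem_univ b,
              mul_lt_mul_of_pos_left hb_lt (div_pos (hpos a b hadj) (hdpos a))⟩
        have hsum1 : ∑ z, w a z / (∑ z', w a z') * f v0 = f v0 := by
          rw [← Finset.sum_mul, ← Finset.sum_div, div_self (hdpos a).ne', one_mul]
        rw [← hharm a hac, hsum1, hfv] at hlt
        exact lt_irrefl _ hlt
  exact key v0 x p hfx hf rfl

lemma harmonic_eq_zero {V : Type*} [Fintype V] [DecidableEq V]
    (G : SimpleGraph V) [DecidableRel G.Adj] (hconn : G.Connected)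
    (w : V → V → ℝ)
    (hnn : ∀ u v, 0 ≤ w u v)
    (hpos : ∀ u v, G.Adj u v → 0 < w u v)
    (hdpos : ∀ v, (0:ℝ) < ∑ z, w v z)
    (x : V) (f : V → ℝ) (hfx : f x = 0)
    (hf : ∀ v, v ≠ x → f v = ∑ z, w v z / (∑ z', w v z') * f z) :
    ∀ v, f v = 0 := by
  have h1 := harmonic_nonpos G hconn w hnn hpos hdpos x f hfx hf
  have h2 := harmonic_nonpos G hconn w hnn hpos hdpos x (fun v => -f v)
    (by simp [hfx]) (by
      intro v hv
      simp only [mul_neg, Finset.sum_neg_distrib]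
      exact neg_inj.mpr (hf v hv))
  intro v
  exact le_antisymm (h1 v) (by simpa using h2 v)

/-- Let `(G, w)` be a finite connected weighted graph (weights symmetric, positive exactly
on edges), and let `x` be a vertex all of whose incident edges have weight `1`.  Then for
any vertex `y` adjacent to `x`, `H_y(x) ≤ 2·w(G) − d(x)` (`= w(G) + w(G ∖ x)`), where
`w(G) = (1/2) ∑_{u,v} w u v` is the total edge weight and `d(x)` the degree of `x`. -/
theorem weighted_hitting_le {V : Type*} [Fintype V] [DecidableEq V]
    (G : SimpleGraph V) [DecidableRel G.Adj] (hconn : G.Connected)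
    (w : V → V → ℝ)
    (hsymm : ∀ u v, w u v = w v u)
    (hpos : ∀ u v, G.Adj u v → 0 < w u v)
    (hzero : ∀ u v, ¬G.Adj u v → w u v = 0)
    (x : V) (hx : ∀ z, G.Adj x z → w x z = 1)
    (y : V) (hxy : G.Adj x y) :
    weightedHitTime G w y x ≤
      ENNReal.ofReal (2 * ((∑ u, ∑ v, w u v) / 2) - (G.degree x : ℝ)) := by

  classical
  have hnn : ∀ u v, 0 ≤ w u v := fun u v => by
    by_cases h : G.Adj u v
    · exact (hpos u v h).le
    · exact (hzero u v h).ge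
  have hdpos : ∀ v, (0:ℝ) < ∑ z, w v z := by
    intro v
    obtain ⟨u, hu⟩ := exists_adj_of_conn G hconn hxy.ne v
    calc (0:ℝ) < w v u := hpos v u hu
    _ ≤ ∑ z, w v z := Finset.single_le_sum (fun z _ => hnn v z) (Finset.mem_univ u)
  -- the Dirichlet operator
  set M : Matrix V V ℝ := fun v z =>
    if v = x then (if z = x then 1 else 0)
    else (if z = v then 1 else 0) - w v z / (∑ z', w v z') with hMdef
  have hmul : ∀ (f : V → ℝ) (v : V), M.mulVec f v =
      if v = x then f x else f v - ∑ z, w v z / (∑ z', w v z') * f z := by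
    intro f v
    by_cases hv : v = x <;>
      simp [Matrix.mulVec, dotProduct, hMdef, hv, sub_mul, Finset.sum_sub_distrib,
        ite_mul, one_mul, zero_mul, Finset.sum_ite_eq']
  have hinj : Function.Injective (Matrix.toLin' M) := by
    rw [injective_iff_map_eq_zero]
    intro f hf0
    have h0 : ∀ v, M.mulVec f v = 0 := fun v => by
      have := congrFun hf0 v
      simpa [Matrix.toLin'_apply] using this
    have hfx : f x = 0 := by
      have := h0 x
      rw [hmul] at this
      simpa using this
    have hf : ∀ v, v ≠ x → f v = ∑ z, w v z / (∑ z', w v z') * f z := by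
      intro v hv
      have := h0 v
      rw [hmul] at this
      simp only [if_neg hv] at this
      linarith
    funext v
    exact harmonic_eq_zero G hconn w hnn hpos hdpos x f hfx hf v
  have hsurj := LinearMap.injective_iff_surjective.mp hinj
  obtain ⟨h, hh⟩ := hsurj (fun v => if v = x then (0:ℝ) else 1)
  have hhp : ∀ v, M.mulVec h v = if v = x then (0:ℝ) else 1 := fun v => by
    have := congrFun hh v
    simpa [Matrix.toLin'_apply] using this
  have hhx : h x = 0 := by
    have := hhp x
    rw [hmul] at this
    simpa using this
  have hhv : ∀ v, v ≠ x → h v = 1 + ∑ z, w v z / (∑ z', w v z') * h z := by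
    intro v hv
    have := hhp v
    rw [hmul] at this
    simp only [if_neg hv] at this
    linarith
  -- nonnegativity
  have hnonneg : ∀ v, 0 ≤ h v := by
    obtain ⟨v1, -, hv1⟩ := Finset.exists_min_image Finset.univ h ⟨x, Finset.mem_univ x⟩
    have hminle : ∀ v, h v1 ≤ h v := fun v => hv1 v (Finset.mem_univ v)
    suffices hge : 0 ≤ h v1 from fun v => le_trans hge (hminle v)
    by_cases hv1x : v1 = x
    · rw [hv1x, hhx]
    · exfalso
      have heq := hhv v1 hv1x
      have hge : ∑ z, w v1 z / (∑ z', w v1 z') * h v1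
          ≤ ∑ z, w v1 z / (∑ z', w v1 z') * h z :=
        Finset.sum_le_sum (fun i _ => mul_le_mul_of_nonneg_left (hminle i)
          (div_nonneg (hnn v1 i) (hdpos v1).le))
      have hsum1 : ∑ z, w v1 z / (∑ z', w v1 z') * h v1 = h v1 := by
        rw [← Finset.sum_mul, ← Finset.sum_div, div_self (hdpos v1).ne', one_mul]
      linarith
  -- the key identity
  have hhv' : ∀ v ∈ Finset.univ.erase x,
      (∑ z, w v z) * h v = (∑ z, w v z) + ∑ z, w v z * h z := by
    intro v hv
    have hvx : v ≠ x := (Finset.mem_erase.mp hv).1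
    rw [hhv v hvx, mul_add, mul_one, Finset.mul_sum]
    congr 1
    refine Finset.sum_congr rfl fun z _ => ?_
    have hd : (∑ z', w v z') ≠ 0 := (hdpos v).ne'
    field_simp
  have e1 : ∑ v ∈ Finset.univ.erase x, (∑ z, w v z) * h v
      = ∑ v ∈ Finset.univ.erase x, (∑ z, w v z)
        + ∑ v ∈ Finset.univ.erase x, ∑ z, w v z * h z := by
    rw [← Finset.sum_add_distrib]
    exact Finset.sum_congr rfl hhv'
  have e2 : ∑ v ∈ Finset.univ.erase x, ∑ z, w v z * h z
      = ∑ z, ((∑ v, w z v) - w x z) * h z := by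
    rw [Finset.sum_comm]
    refine Finset.sum_congr rfl fun z _ => ?_
    rw [← Finset.sum_mul, Finset.sum_erase_eq_sub (Finset.mem_univ x)]
    congr 2
    exact Finset.sum_congr rfl fun v _ => hsymm v z
  have e3 : ∑ z, ((∑ v, w z v) - w x z) * h z
      = (∑ z ∈ Finset.univ.erase x, (∑ v, w z v) * h z) - ∑ z, w x z * h z := by
    simp only [sub_mul, Finset.sum_sub_distrib]
    congr 1
    rw [Finset.sum_erase_eq_sub (Finset.mem_univ x), hhx, mul_zero, sub_zero]
  have key : ∑ z, w x z * h z = ∑ v ∈ Finset.univ.erase x, (∑ z, w v z) := by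
    have := e1
    rw [e2, e3] at this
    linarith
  -- conclusion
  have hy_le : h y ≤ ∑ v ∈ Finset.univ.erase x, (∑ z, w v z) := by
    rw [← key]
    have hle : w x y * h y ≤ ∑ z, w x z * h z :=
      Finset.single_le_sum (fun z _ => mul_nonneg (hnn x z) (hnonneg z))
        (Finset.mem_univ y)
    rwa [hx y hxy, one_mul] at hle
  have hdx : (∑ z, w x z) = (G.degree x : ℝ) := by
    have hpt : ∀ z, w x z = if G.Adj x z then (1:ℝ) else 0 := fun z => by
      by_cases hadj : G.Adj x z
      · simp [hadj, hx z hadj]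
      · simp [hadj, hzero x z hadj]
    rw [Finset.sum_congr rfl (fun z _ => hpt z), Finset.sum_boole]
    simp [SimpleGraph.degree, SimpleGraph.neighborFinset_eq_filter]
  have hbound : ∑ v ∈ Finset.univ.erase x, (∑ z, w v z)
      = 2 * ((∑ u, ∑ v, w u v) / 2) - (G.degree x : ℝ) := by
    rw [Finset.sum_erase_eq_sub (Finset.mem_univ x), hdx]
    ring
  have hmem : ENNReal.ofReal (h y) ∈ {r : ℝ≥0∞ | ∃ h : V → ℝ≥0∞, r = h y ∧ h x = 0 ∧
      ∀ v, v ≠ x → h v = 1 + ∑ z, ENNReal.ofReal (w v z / ∑ z', w v z') * h z} := by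
    refine ⟨fun v => ENNReal.ofReal (h v), rfl, by simp [hhx], ?_⟩
    intro v hv
    have hterm : ∀ z ∈ Finset.univ, 0 ≤ w v z / (∑ z', w v z') * h z := fun z _ =>
      mul_nonneg (div_nonneg (hnn v z) (hdpos v).le) (hnonneg z)
    simp only
    rw [hhv v hv,
      ENNReal.ofReal_add zero_le_one (Finset.sum_nonneg hterm), ENNReal.ofReal_one,
      ENNReal.ofReal_sum_of_nonneg hterm]
    congr 1
    exact Finset.sum_congr rfl fun z _ =>
      ENNReal.ofReal_mul (div_nonneg (hnn v z) (hdpos v).le)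
  calc weightedHitTime G w y x ≤ ENNReal.ofReal (h y) := sInf_le hmem
  _ ≤ _ := ENNReal.ofReal_le_ofReal (by rw [← hbound]; exact hy_le)
end

section
/- For any finite connected graph G on n vertices, there is a choice-random-walk strategy such that the maximum expected hitting time between any two vertices is less than 3·|E(G)|, and also less than n². -/
open scoped ENNReal

/-!
The controller makes the choice random walk emulate the random walk on `G` with edge weights
`2^{-min(d(a,y), d(b,y))}`, where `y` is the target: at every vertex these weights differ by a
factor of at most `2`, and any such normalised weighting is realised by a suitable preference
between the two sampled neighbours.

For this reversible walk the hitting time of `y` is at most `∑_{z ≠ y} wdeg z · R(z, y)`, where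
`R` is the effective resistance. By Thomson's principle, `R(z, y)` is at most the energy of the unit
flow that splits evenly over the `m` edges from `z` one level down and then follows shortest paths,
which gives `R(z, y) ≤ 2^{d(z,y)-1} (1/m + 1)`. As `wdeg z = (deg z + m) 2^{-d(z,y)}`, the term of
`z` is at most `(deg z + m)(1/m + 1)/2`, which is at most both `deg z + m` and `deg z + 1`. Each
edge goes down from at most one of its ends, so summing gives `< 3|E|` and `< n²`.
-/

open Finset

section

variable {V : Type*}

section ChoiceWalk

variable [Fintype V] [DecidableEq V]

theorem IsCRWStep.nonneg_s10 {G : SimpleGraph V} [DecidableRel G.Adj] {v : V} {q : V → ℝ}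
    (hq : IsCRWStep G v q) (i : V) : 0 ≤ q i := by
  obtain ⟨α, hα, hq⟩ := hq
  rw [hq]
  split_ifs with hi
  · exact div_nonneg (mul_nonneg zero_le_two (sum_nonneg fun j hj => (hα i hi j hj).1))
      (sq_nonneg _)
  · exact le_rfl

variable (G : SimpleGraph V) [DecidableRel G.Adj]

/- Preferring `i` to `j` with probability `1/2 + d (w i - w j) / (2 s)` makes the walk step to `i`
with probability `w i / s`; the ratio bound `w i ≤ 2 w j` keeps these preferences in `[0, 1]`. -/
theorem isCRWStep_div_sum {v : V} (w : V → ℝ) (hpos : ∀ i ∈ G.neighborFinset v, 0 < w i)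
    (hle : ∀ i ∈ G.neighborFinset v, ∀ j ∈ G.neighborFinset v, w i ≤ 2 * w j) :
    IsCRWStep G v fun i =>
      if i ∈ G.neighborFinset v then w i / ∑ j ∈ G.neighborFinset v, w j else 0 := by
  set N := G.neighborFinset v
  set s := ∑ j ∈ N, w j
  set d : ℝ := (G.degree v : ℝ)
  have hcard : (#N : ℝ) = d := by simp [N, d]
  have hdiff : ∀ i ∈ N, ∀ j ∈ N, d * (w i - w j) ≤ s := by
    intro i hi j hj
    calc d * (w i - w j) = ∑ _b ∈ N, (w i - w j) := by rw [sum_const, nsmul_eq_mul, hcard]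
      _ ≤ s := sum_le_sum fun b hb => by linarith [hle i hi j hj, hle i hi b hb]
  refine ⟨fun i j => 1 / 2 + d * (w i - w j) / (2 * s), fun i hi j hj => ?_, fun i => ?_⟩
  · have hs : 0 < s := sum_pos hpos ⟨i, hi⟩
    have h₁ := hdiff i hi j hj
    have h₂ := hdiff j hj i hi
    have hα : 1 / 2 + d * (w i - w j) / (2 * s) = (s + d * (w i - w j)) / (2 * s) := by
      field_simp
    beta_reduce
    rw [hα]
    refine ⟨div_nonneg (by linarith) (by positivity),
      (div_le_one (by positivity)).mpr (by linarith), by field_simp; ring⟩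
  · by_cases hi : i ∈ N
    · show (if i ∈ N then w i / s else 0) =
        if i ∈ N then 2 * (∑ j ∈ N, (1 / 2 + d * (w i - w j) / (2 * s))) / d ^ 2 else 0
      rw [if_pos hi, if_pos hi]
      have hs : 0 < s := sum_pos hpos ⟨i, hi⟩
      have hd : 0 < d := by rw [← hcard]; exact_mod_cast card_pos.mpr ⟨i, hi⟩
      rw [sum_add_distrib, sum_const, ← sum_div, ← mul_sum, sum_sub_distrib, sum_const,
        nsmul_eq_mul, nsmul_eq_mul, hcard]
      field_simp
      ring
    · show (if i ∈ N then w i / s else 0) = if i ∈ N then _ else 0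
      rw [if_neg hi, if_neg hi]

theorem crwHitTime_le_ofReal_s10 {h : V → ℝ} {y : V} (hnonneg : ∀ v, 0 ≤ h v) (hy : h y = 0)
    (hstep : ∀ v ≠ y, ∃ q : V → ℝ, IsCRWStep G v q ∧ h v = 1 + ∑ b, q b * h b) (x : V) :
    crwHitTime G x {y} ≤ ENNReal.ofReal (h x) := by
  refine sInf_le ⟨fun v => ENNReal.ofReal (h v), rfl, fun v hv => ?_, fun v hv => ?_⟩
  · beta_reduce
    rw [Set.mem_singleton_iff.mp hv, hy, ENNReal.ofReal_zero]
  · obtain ⟨q, hq, hqh⟩ := hstep v hv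
    have hterm : ∀ b, 0 ≤ q b * h b := fun b => mul_nonneg (hq.nonneg_s10 b) (hnonneg b)
    refine ⟨q, hq, ?_⟩
    beta_reduce
    rw [hqh, ENNReal.ofReal_add zero_le_one (sum_nonneg fun b _ => hterm b), ENNReal.ofReal_one,
      ENNReal.ofReal_sum_of_nonneg fun b _ => hterm b]
    simp_rw [ENNReal.ofReal_mul (hq.nonneg_s10 _)]

end ChoiceWalk

structure Conductance (G : SimpleGraph V) where
  w : V → V → ℝ
  symm : ∀ a b, w a b = w b a
  nonneg_s10 : ∀ a b, 0 ≤ w a b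
  pos_of_adj : ∀ {a b}, G.Adj a b → 0 < w a b

section Network

variable [Fintype V]

def divergence : (V → V → ℝ) →ₗ[ℝ] V → ℝ where
  toFun θ a := ∑ b, θ a b
  map_add' θ η := by ext; simp [sum_add_distrib]
  map_smul' r θ := by ext; simp [mul_sum]

theorem sum_sum_mul_sub_of_antisymm {θ : V → V → ℝ} (hθ : ∀ a b, θ b a = -θ a b) (f : V → ℝ) :
    ∑ a, ∑ b, θ a b * (f a - f b) = 2 * ∑ a, f a * divergence θ a := by
  have hswap : ∑ a, ∑ b, θ a b * f b = -∑ a, ∑ b, θ a b * f a := by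
    rw [sum_comm, ← sum_neg_distrib]
    exact sum_congr rfl fun a _ => by rw [← sum_neg_distrib]; simp [hθ a]
  simp only [mul_sub, sum_sub_distrib, hswap, sub_neg_eq_add, ← two_mul, divergence,
    LinearMap.coe_mk, AddHom.coe_mk, mul_sum]
  simp only [mul_comm]

namespace Conductance

variable {G : SimpleGraph V} (c : Conductance G)

def wdeg (v : V) : ℝ := ∑ b, c.w v b

theorem wdeg_pos_of_adj {v b : V} (h : G.Adj v b) : 0 < c.wdeg v :=
  sum_pos' (fun a _ => c.nonneg_s10 v a) ⟨b, mem_univ b, c.pos_of_adj h⟩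

def lap : (V → ℝ) →ₗ[ℝ] V → ℝ where
  toFun f v := ∑ b, c.w v b * (f v - f b)
  map_add' f g := by
    ext v
    simp only [Pi.add_apply, ← sum_add_distrib]
    exact sum_congr rfl fun _ _ => by ring
  map_smul' r f := by
    ext v
    simp only [Pi.smul_apply, smul_eq_mul, RingHom.id_apply, mul_sum]
    exact sum_congr rfl fun _ _ => by ring

theorem lap_apply (f : V → ℝ) (v : V) : c.lap f v = ∑ b, c.w v b * (f v - f b) := rfl

theorem nonneg_of_lap_nonneg (hconn : G.Connected) {B : Set V} (hB : B.Nonempty) {u : V → ℝ}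
    (hu : ∀ v ∈ B, 0 ≤ u v) (hlap : ∀ v ∉ B, 0 ≤ c.lap u v) (v : V) : 0 ≤ u v := by
  obtain ⟨v₀, -, hmin⟩ := exists_min_image univ u ⟨v, mem_univ v⟩
  by_contra! hneg
  have hv₀ : u v₀ < 0 := (hmin v (mem_univ v)).trans_lt hneg
  obtain ⟨b, hb⟩ := hB
  obtain ⟨p⟩ := hconn v₀ b
  obtain ⟨d, -, hd₁, hd₂⟩ := p.exists_boundary_dart {a | u a = u v₀} rfl
    fun h => by linarith [hu b hb, h.symm ▸ hv₀]
  change u d.fst = u v₀ at hd₁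
  change u d.snd ≠ u v₀ at hd₂
  have hfst : d.fst ∉ B := fun h => by linarith [hu _ h]
  have : c.lap u d.fst < 0 := by
    refine sum_neg' (fun a _ => ?_) ⟨d.snd, mem_univ _, ?_⟩
    · exact mul_nonpos_of_nonneg_of_nonpos (c.nonneg_s10 _ _) (by linarith [hmin a (mem_univ a)])
    · exact mul_neg_of_pos_of_neg (c.pos_of_adj d.adj)
        (by linarith [lt_of_le_of_ne (hmin d.snd (mem_univ _)) (Ne.symm hd₂)])
  linarith [hlap _ hfst]

theorem lap_const_sub (r : ℝ) (f : V → ℝ) : c.lap (fun a => r - f a) = -c.lap f := by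
  ext v
  simp only [lap_apply, Pi.neg_apply, ← sum_neg_distrib]
  exact sum_congr rfl fun _ _ => by ring

noncomputable def energy (θ : V → V → ℝ) : ℝ := (∑ a, ∑ b, θ a b ^ 2 / c.w a b) / 2

theorem energy_smul (r : ℝ) (θ : V → V → ℝ) : c.energy (r • θ) = r ^ 2 * c.energy θ := by
  simp only [energy, mul_div_assoc', mul_sum, Pi.smul_apply, smul_eq_mul]
  congr 1
  exact sum_congr rfl fun a _ => sum_congr rfl fun b _ => by ring

theorem energy_add_of_mul_eq_zero {θ η : V → V → ℝ} (h : ∀ a b, θ a b * η a b = 0) :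
    c.energy (θ + η) = c.energy θ + c.energy η := by
  simp only [energy, ← add_div, ← sum_add_distrib, Pi.add_apply]
  congr 1
  exact sum_congr rfl fun a _ => sum_congr rfl fun b _ => by
    rw [add_sq, mul_assoc, h a b, mul_zero, add_zero]

theorem energy_sum_le {ι : Type*} (s : Finset ι) (θ : ι → V → V → ℝ) :
    c.energy (∑ i ∈ s, θ i) ≤ #s * ∑ i ∈ s, c.energy (θ i) := by
  have hpt : ∀ a b, (∑ i ∈ s, θ i a b) ^ 2 / c.w a b ≤ #s * ∑ i ∈ s, θ i a b ^ 2 / c.w a b :=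
    fun a b => by
      rw [← sum_div, ← mul_div_assoc]
      exact div_le_div_of_nonneg_right sq_sum_le_card_mul_sum_sq (c.nonneg_s10 a b)
  calc c.energy (∑ i ∈ s, θ i) ≤ (∑ a, ∑ b, #s * ∑ i ∈ s, θ i a b ^ 2 / c.w a b) / 2 := by
        simp only [energy, Finset.sum_apply]
        gcongr with a _ b _
        exact hpt a b
    _ = #s * ∑ i ∈ s, c.energy (θ i) := by
        simp only [energy, sum_div, mul_sum, mul_div_assoc]
        conv_rhs => rw [sum_comm]
        exact sum_congr rfl fun _ _ => sum_comm

variable [DecidableEq V]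

/-- `lap` with its row at `y` replaced by evaluation at `y`: inverting it solves the Dirichlet
problem `lap φ = t` off `y`, `φ y = t y`. -/
def groundedLap (y : V) : (V → ℝ) →ₗ[ℝ] V → ℝ where
  toFun f := Function.update (c.lap f) y (f y)
  map_add' f g := by ext v; by_cases hv : v = y <;> simp [hv]
  map_smul' r f := by ext v; by_cases hv : v = y <;> simp [hv]

theorem groundedLap_injective (hconn : G.Connected) (y : V) :
    Function.Injective (c.groundedLap y) := by
  rw [← LinearMap.ker_eq_bot, LinearMap.ker_eq_bot']
  intro f hf
  have hy : f y = 0 := by simpa [groundedLap] using congrFun hf y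
  have hlap : ∀ v ≠ y, c.lap f v = 0 := fun v hv => by
    simpa [groundedLap, hv] using congrFun hf v
  have hsingle : ({y} : Set V).Nonempty := Set.singleton_nonempty y
  ext v
  refine le_antisymm ?_ (c.nonneg_of_lap_nonneg hconn hsingle (by simp [hy])
    (fun v hv => (hlap v hv).ge) v)
  have := c.nonneg_of_lap_nonneg hconn hsingle (u := -f) (by simp [hy])
    (fun v hv => by rw [map_neg, Pi.neg_apply, hlap v hv, neg_zero]) v
  simpa using this

noncomputable def potential (hconn : G.Connected) (y : V) : (V → ℝ) ≃ₗ[ℝ] V → ℝ :=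
  (LinearEquiv.ofInjectiveEndo _ (c.groundedLap_injective hconn y)).symm

variable (hconn : G.Connected) {y : V}

theorem groundedLap_potential (t : V → ℝ) : c.groundedLap y (c.potential hconn y t) = t :=
  (LinearEquiv.ofInjectiveEndo _ (c.groundedLap_injective hconn y)).apply_symm_apply t

theorem potential_apply_ground (t : V → ℝ) : c.potential hconn y t y = t y := by
  simpa [groundedLap] using congrFun (c.groundedLap_potential hconn (y := y) t) y

theorem lap_potential (t : V → ℝ) {v : V} (hv : v ≠ y) : c.lap (c.potential hconn y t) v = t v := by
  simpa [groundedLap, hv] using congrFun (c.groundedLap_potential hconn (y := y) t) v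

theorem potential_nonneg {t : V → ℝ} (ht : 0 ≤ t) : 0 ≤ c.potential hconn y t := fun v =>
  c.nonneg_of_lap_nonneg hconn (Set.singleton_nonempty y)
    (fun a ha => by rw [ha, potential_apply_ground]; exact ht y)
    (fun a ha => by rw [lap_potential _ _ _ ha]; exact ht a) v

noncomputable def effResistance (z y : V) : ℝ := c.potential hconn y (Pi.single z 1) z

theorem potential_single_le_effResistance {z : V} (hz : z ≠ y) (v : V) :
    c.potential hconn y (Pi.single z 1) v ≤ c.effResistance hconn z y := by
  set φ := c.potential hconn y (Pi.single z 1)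
  have hφy : φ y = 0 := by simp [φ, potential_apply_ground, hz.symm]
  have hφz : 0 ≤ φ z := c.potential_nonneg hconn (Pi.single_nonneg.mpr zero_le_one) z
  have := c.nonneg_of_lap_nonneg hconn (B := {y, z}) (Set.insert_nonempty _ _)
    (u := fun a => φ z - φ a) ?_ ?_ v
  · simpa [effResistance, sub_nonneg] using this
  · rintro a (rfl | rfl) <;> simp [hφy, hφz]
  · intro a ha
    simp only [Set.mem_insert_iff, Set.mem_singleton_iff, not_or] at ha
    simp [lap_const_sub, φ, lap_potential _ _ _ ha.1, ha.2]

theorem potential_le_sum_effResistance {t : V → ℝ} (ht : 0 ≤ t) (hty : t y = 0) (x : V) :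
    c.potential hconn y t x ≤ ∑ z ∈ univ.erase y, t z * c.effResistance hconn z y := by
  have ht_eq : t = ∑ z ∈ univ.erase y, t z • Pi.single z 1 := by
    ext v
    by_cases hv : v = y
    · subst hv
      simp [hty, Pi.single_apply]
    · simp [Pi.single_apply, hv]
  conv_lhs => rw [ht_eq]
  simp only [map_sum, map_smul, Finset.sum_apply, Pi.smul_apply, smul_eq_mul]
  exact sum_le_sum fun z hz => mul_le_mul_of_nonneg_left
    (c.potential_single_le_effResistance hconn (ne_of_mem_erase hz) x) (ht z)

/-- Thomson's principle. -/
theorem effResistance_le_energy {z : V} (hz : z ≠ y) {θ : V → V → ℝ}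
    (hanti : ∀ a b, θ b a = -θ a b) (hsupp : ∀ a b, ¬G.Adj a b → θ a b = 0)
    (hdiv : divergence θ = Pi.single z 1 - Pi.single y 1) :
    c.effResistance hconn z y ≤ c.energy θ := by
  set φ := c.potential hconn y (Pi.single z 1)
  have hφy : φ y = 0 := by simp [φ, potential_apply_ground, hz.symm]
  have hflow : ∑ a, ∑ b, θ a b * (φ a - φ b) = 2 * φ z := by
    rw [sum_sum_mul_sub_of_antisymm hanti, hdiv]
    simp [Pi.single_apply, hφy, mul_sub]
  have hdirichlet : ∑ a, ∑ b, c.w a b * (φ a - φ b) ^ 2 = 2 * φ z := by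
    have hlap : ∀ a, φ a * c.lap φ a = φ a * Pi.single (M := fun _ => ℝ) z 1 a := fun a => by
      by_cases ha : a = y
      · rw [ha, hφy, zero_mul, zero_mul]
      · rw [lap_potential _ _ _ ha]
    calc ∑ a, ∑ b, c.w a b * (φ a - φ b) ^ 2
        = ∑ a, ∑ b, c.w a b * (φ a - φ b) * (φ a - φ b) := by simp only [sq, mul_assoc]
      _ = 2 * ∑ a, φ a * c.lap φ a :=
        sum_sum_mul_sub_of_antisymm (fun a b => by rw [c.symm]; ring) φ
      _ = 2 * φ z := by simp [hlap, Pi.single_apply]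
  have hamgm : ∀ a b,
      2 * (θ a b * (φ a - φ b)) ≤ θ a b ^ 2 / c.w a b + c.w a b * (φ a - φ b) ^ 2 := by
    intro a b
    by_cases hab : G.Adj a b
    · have hw := c.pos_of_adj hab
      rw [div_add' _ _ _ hw.ne', le_div_iff₀ hw]
      nlinarith [sq_nonneg (θ a b - c.w a b * (φ a - φ b))]
    · simp [hsupp a b hab, mul_nonneg (c.nonneg_s10 a b) (sq_nonneg (φ a - φ b))]
  have := sum_le_sum fun a (_ : a ∈ univ) => sum_le_sum fun b (_ : b ∈ univ) => hamgm a b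
  simp only [← mul_sum, sum_add_distrib, hflow, hdirichlet] at this
  rw [effResistance, energy]
  linarith

/-- The expected hitting time of `y` for the walk stepping from `v` to `b` with probability
`w v b / wdeg v` (see `hitTime_eq_one_add`). -/
noncomputable def hitTime (y : V) : V → ℝ := c.potential hconn y (Function.update c.wdeg y 0)

theorem hitTime_ground : c.hitTime hconn y y = 0 := by
  simp [hitTime, potential_apply_ground]

theorem update_wdeg_nonneg : 0 ≤ Function.update c.wdeg y 0 := fun v => by
  by_cases hv : v = y
  · simp [hv]
  · simpa [hv, wdeg] using sum_nonneg fun b _ => c.nonneg_s10 v b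

theorem hitTime_nonneg : 0 ≤ c.hitTime hconn y :=
  c.potential_nonneg hconn c.update_wdeg_nonneg

theorem hitTime_eq_one_add {v : V} (hv : v ≠ y) (hpos : 0 < c.wdeg v) :
    c.hitTime hconn y v = 1 + ∑ b, c.w v b / c.wdeg v * c.hitTime hconn y b := by
  have h := c.lap_potential hconn (Function.update c.wdeg y 0) hv
  rw [Function.update_of_ne hv, lap_apply] at h
  simp only [mul_sub, sum_sub_distrib, ← sum_mul] at h
  simp only [div_mul_eq_mul_div, ← sum_div]
  rw [wdeg] at hpos h ⊢
  field_simp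
  rw [hitTime]
  linarith

theorem hitTime_le_sum (x : V) :
    c.hitTime hconn y x ≤ ∑ z ∈ univ.erase y, c.wdeg z * c.effResistance hconn z y := by
  refine (c.potential_le_sum_effResistance hconn c.update_wdeg_nonneg (by simp) x).trans_eq ?_
  exact sum_congr rfl fun z hz => by rw [Function.update_of_ne (ne_of_mem_erase hz)]

end Conductance

end Network

section StarFlow

variable [DecidableEq V] (z : V) (D : Finset V)

def starFlow : V → V → ℝ := fun a b =>
  (if a = z ∧ b ∈ D then 1 else 0) - (if b = z ∧ a ∈ D then 1 else 0)

theorem starFlow_antisymm (a b : V) : starFlow z D b a = -starFlow z D a b := by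
  simp only [starFlow]
  ring

variable {z D}

theorem starFlow_eq_zero_of_ne {a b : V} (ha : a ≠ z) (hb : b ≠ z) : starFlow z D a b = 0 := by
  simp [starFlow, ha, hb]

theorem starFlow_eq_zero_of_not_adj {G : SimpleGraph V} (hD : ∀ u ∈ D, G.Adj z u) {a b : V}
    (h : ¬G.Adj a b) : starFlow z D a b = 0 := by
  have h₁ : ¬(a = z ∧ b ∈ D) := fun ⟨ha, hb⟩ => h (ha ▸ hD b hb)
  have h₂ : ¬(b = z ∧ a ∈ D) := fun ⟨hb, ha⟩ => h (hb ▸ (hD a ha).symm)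
  rw [starFlow, if_neg h₁, if_neg h₂, sub_zero]

theorem divergence_starFlow [Fintype V] (hz : z ∉ D) :
    divergence (starFlow z D) = (#D : ℝ) • Pi.single z 1 - ∑ u ∈ D, Pi.single u 1 := by
  ext a
  by_cases ha : a = z
  · subst ha
    simp [divergence, starFlow, hz, Pi.single_apply]
  · by_cases haD : a ∈ D <;> simp [divergence, starFlow, ha, haD, Pi.single_apply]

theorem energy_starFlow [Fintype V] {G : SimpleGraph V} (c : Conductance G) (hz : z ∉ D) :
    c.energy (starFlow z D) = ∑ u ∈ D, (c.w z u)⁻¹ := by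
  have hpt : ∀ a b, starFlow z D a b ^ 2 / c.w a b =
      (if a = z ∧ b ∈ D then (c.w z b)⁻¹ else 0) + (if b = z ∧ a ∈ D then (c.w z a)⁻¹ else 0) := by
    intro a b
    by_cases h₁ : a = z ∧ b ∈ D
    · simp [starFlow, h₁, hz]
    · by_cases h₂ : b = z ∧ a ∈ D
      · simp [starFlow, h₂, hz, c.symm a z]
      · simp [starFlow, h₁, h₂]
  simp only [Conductance.energy, hpt, sum_add_distrib, ite_and]
  simp [sum_ite_eq', sum_ite_mem]

theorem starFlow_mul_eq_zero {θ : V → V → ℝ} (hanti : ∀ a b, θ b a = -θ a b)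
    (hz : ∀ b, θ z b = 0) (a b : V) : starFlow z D a b * θ a b = 0 := by
  by_cases ha : a = z
  · rw [ha, hz, mul_zero]
  by_cases hb : b = z
  · rw [hb, hanti, hz, neg_zero, mul_zero]
  rw [starFlow_eq_zero_of_ne ha hb, zero_mul]

end StarFlow

namespace SimpleGraph.Connected

variable {G : SimpleGraph V}

theorem dist_le_dist_add_one (hconn : G.Connected) {a b : V} (h : G.Adj a b) (y : V) :
    G.dist a y ≤ G.dist b y + 1 := by
  have := hconn.dist_triangle (u := a) (v := b) (w := y)
  rw [dist_eq_one_iff_adj.mpr h] at this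
  omega

theorem exists_adj_dist_add_one_eq (hconn : G.Connected) {v y : V} (hv : v ≠ y) :
    ∃ b, G.Adj v b ∧ G.dist b y + 1 = G.dist v y := by
  obtain ⟨p, hp⟩ := hconn.exists_walk_length_eq_dist v y
  cases p with
  | nil => exact absurd rfl hv
  | @cons _ b _ h q =>
    refine ⟨b, h, le_antisymm ?_ (hconn.dist_le_dist_add_one h y)⟩
    rw [← hp, Walk.length_cons]
    exact Nat.succ_le_succ (dist_le q)

noncomputable def stepToward [DecidableEq V] (hconn : G.Connected) (y v : V) : V :=
  if h : v = y then v else (hconn.exists_adj_dist_add_one_eq h).choose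

variable [DecidableEq V] {hconn : G.Connected} {y v : V}

theorem adj_stepToward (hv : v ≠ y) : G.Adj v (hconn.stepToward y v) := by
  rw [stepToward, dif_neg hv]
  exact (hconn.exists_adj_dist_add_one_eq hv).choose_spec.1

theorem dist_stepToward_add_one (hv : v ≠ y) :
    G.dist (hconn.stepToward y v) y + 1 = G.dist v y := by
  rw [stepToward, dif_neg hv]
  exact (hconn.exists_adj_dist_add_one_eq hv).choose_spec.2

end SimpleGraph.Connected

namespace SimpleGraph

variable (G : SimpleGraph V) [DecidableRel G.Adj] (y : V)

noncomputable def levelConductance : Conductance G where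
  w a b := if G.Adj a b then ((2 : ℝ) ^ min (G.dist a y) (G.dist b y))⁻¹ else 0
  symm a b := by simp only [G.adj_comm a b, min_comm]
  nonneg_s10 a b := by split_ifs <;> positivity
  pos_of_adj h := by simp only [if_pos h]; positivity

variable {G y} in
theorem levelConductance_w_of_adj (hconn : G.Connected) {v b : V} (h : G.Adj v b) :
    (G.levelConductance y).w v b = (if G.dist b y < G.dist v y then 2 else 1) / 2 ^ G.dist v y := by
  simp only [levelConductance, if_pos h]
  split_ifs with hb
  · have := hconn.dist_le_dist_add_one h y
    rw [min_eq_right hb.le, show G.dist v y = G.dist b y + 1 by omega, pow_succ]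
    field_simp
  · rw [min_eq_left (not_lt.mp hb), one_div]

variable [Fintype V]

noncomputable def downNeighborFinset (v : V) : Finset V :=
  (G.neighborFinset v).filter fun b => G.dist b y < G.dist v y

variable {G y}

theorem mem_downNeighborFinset {v b : V} :
    b ∈ G.downNeighborFinset y v ↔ G.Adj v b ∧ G.dist b y < G.dist v y := by
  simp [downNeighborFinset]

theorem dist_add_one_of_mem_downNeighborFinset (hconn : G.Connected) {v b : V}
    (hb : b ∈ G.downNeighborFinset y v) : G.dist b y + 1 = G.dist v y := by
  obtain ⟨hadj, hlt⟩ := mem_downNeighborFinset.mp hb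
  have := hconn.dist_le_dist_add_one hadj y
  omega

theorem card_downNeighborFinset_le_degree (v : V) : #(G.downNeighborFinset y v) ≤ G.degree v :=
  card_filter_le _ _

theorem sum_card_downNeighborFinset_le : ∑ v, #(G.downNeighborFinset y v) ≤ #G.edgeFinset := by
  rw [← card_sigma]
  refine card_le_card_of_injOn (fun p => s(p.1, p.2)) (fun p hp => ?_) ?_
  · simpa using (mem_downNeighborFinset.mp (mem_sigma.mp hp).2).1
  · rintro ⟨a, b⟩ hp ⟨c, d⟩ hq heq
    have hab := (mem_downNeighborFinset.mp (mem_sigma.mp hp).2).2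
    have hcd := (mem_downNeighborFinset.mp (mem_sigma.mp hq).2).2
    rcases Sym2.eq_iff.mp heq with ⟨rfl, rfl⟩ | ⟨rfl, rfl⟩
    · rfl
    · dsimp only at hab hcd
      omega

theorem levelConductance_wdeg_eq_sum (v : V) :
    (G.levelConductance y).wdeg v = ∑ b ∈ G.neighborFinset v, (G.levelConductance y).w v b := by
  refine (sum_subset (subset_univ _) fun b _ hb => ?_).symm
  simp [levelConductance, (G.mem_neighborFinset v b).not.mp hb]

theorem levelConductance_wdeg (hconn : G.Connected) (v : V) :
    (G.levelConductance y).wdeg v =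
      (G.degree v + #(G.downNeighborFinset y v)) / 2 ^ G.dist v y := by
  rw [levelConductance_wdeg_eq_sum, sum_congr rfl fun b hb =>
    levelConductance_w_of_adj hconn ((G.mem_neighborFinset v b).mp hb), ← sum_div]
  congr 1
  simp only [downNeighborFinset, ← card_neighborFinset_eq_degree, card_eq_sum_ones, sum_filter,
    Nat.cast_sum, ← sum_add_distrib]
  exact sum_congr rfl fun b _ => by split_ifs <;> norm_num

variable [DecidableEq V]

theorem card_downNeighborFinset_pos (hconn : G.Connected) {v : V} (hv : v ≠ y) :
    0 < #(G.downNeighborFinset y v) :=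
  card_pos.mpr ⟨hconn.stepToward y v, mem_downNeighborFinset.mpr
    ⟨hconn.adj_stepToward hv, by have := hconn.dist_stepToward_add_one hv; omega⟩⟩

theorem isCRWStep_levelConductance (hconn : G.Connected) (v : V) :
    IsCRWStep G v fun b => (G.levelConductance y).w v b / (G.levelConductance y).wdeg v := by
  convert isCRWStep_div_sum G ((G.levelConductance y).w v)
    (fun i hi => (G.levelConductance y).pos_of_adj ((G.mem_neighborFinset v i).mp hi))
    (fun i hi j hj => ?_) using 2 with b
  · split_ifs with hb
    · rw [levelConductance_wdeg_eq_sum]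
    · simp [levelConductance, (G.mem_neighborFinset v b).not.mp hb]
  · rw [levelConductance_w_of_adj hconn ((G.mem_neighborFinset v i).mp hi),
      levelConductance_w_of_adj hconn ((G.mem_neighborFinset v j).mp hj), mul_div_assoc']
    gcongr
    split_ifs <;> norm_num

end SimpleGraph

namespace SimpleGraph.Connected

variable [DecidableEq V] {G : SimpleGraph V}

noncomputable def pathFlow (hconn : G.Connected) (y u : V) : V → V → ℝ :=
  if h : u = y then 0
  else
    have := dist_stepToward_add_one (hconn := hconn) h
    starFlow u {hconn.stepToward y u} + pathFlow hconn y (hconn.stepToward y u)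
termination_by G.dist u y

variable {hconn : G.Connected} {y : V}

theorem pathFlow_antisymm (u a b : V) : hconn.pathFlow y u b a = -hconn.pathFlow y u a b := by
  fun_induction hconn.pathFlow y u with
  | case1 => simp
  | case2 u hu _ ih =>
    simp only [Pi.add_apply]
    rw [starFlow_antisymm, ih]
    ring

theorem pathFlow_eq_zero_of_not_adj (u : V) {a b : V} (h : ¬G.Adj a b) :
    hconn.pathFlow y u a b = 0 := by
  fun_induction hconn.pathFlow y u with
  | case1 => rfl
  | case2 u hu _ ih =>
    rw [Pi.add_apply, Pi.add_apply, ih, add_zero]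
    exact starFlow_eq_zero_of_not_adj (by simpa using adj_stepToward hu) h

theorem pathFlow_eq_zero_of_dist_lt {u a : V} (h : G.dist u y < G.dist a y) (b : V) :
    hconn.pathFlow y u a b = 0 := by
  fun_induction hconn.pathFlow y u with
  | case1 => rfl
  | case2 u hu hdist ih =>
    rw [Pi.add_apply, Pi.add_apply, ih (by omega), add_zero]
    have hau : a ≠ u := by rintro rfl; omega
    have has : a ≠ hconn.stepToward y u := by rintro rfl; omega
    simp [starFlow, hau, has]

variable [Fintype V]

theorem divergence_pathFlow (u : V) :
    divergence (hconn.pathFlow y u) = Pi.single u 1 - Pi.single y 1 := by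
  fun_induction hconn.pathFlow y u with
  | case1 => simp
  | case2 u hu _ ih =>
    rw [map_add, ih, divergence_starFlow (by simpa using (adj_stepToward hu).ne)]
    simp

theorem energy_pathFlow [DecidableRel G.Adj] (u : V) :
    (G.levelConductance y).energy (hconn.pathFlow y u) = 2 ^ G.dist u y - 1 := by
  fun_induction hconn.pathFlow y u with
  | case1 => simp [Conductance.energy]
  | case2 u hu hdist ih =>
    rw [Conductance.energy_add_of_mul_eq_zero _ (starFlow_mul_eq_zero (pathFlow_antisymm _)
        fun b => pathFlow_eq_zero_of_dist_lt (by omega) b),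
      energy_starFlow _ (by simpa using (adj_stepToward hu).ne), sum_singleton, ih,
      levelConductance_w_of_adj hconn (adj_stepToward hu), if_pos (by omega), ← hdist, pow_succ]
    field_simp
    ring

variable [DecidableRel G.Adj]

variable (hconn y) in
noncomputable def spreadFlow (z : V) : V → V → ℝ :=
  (#(G.downNeighborFinset y z) : ℝ)⁻¹ •
    (starFlow z (G.downNeighborFinset y z) + ∑ u ∈ G.downNeighborFinset y z, hconn.pathFlow y u)

theorem spreadFlow_antisymm (z a b : V) : hconn.spreadFlow y z b a = -hconn.spreadFlow y z a b := by
  simp only [spreadFlow, Pi.smul_apply, Pi.add_apply, Finset.sum_apply, smul_eq_mul]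
  rw [starFlow_antisymm z _ a b, sum_congr rfl fun u _ => pathFlow_antisymm u a b, sum_neg_distrib]
  ring

theorem spreadFlow_eq_zero_of_not_adj (z : V) {a b : V} (h : ¬G.Adj a b) :
    hconn.spreadFlow y z a b = 0 := by
  simp [spreadFlow, pathFlow_eq_zero_of_not_adj _ h,
    starFlow_eq_zero_of_not_adj (fun u hu => (mem_downNeighborFinset.mp hu).1) h]

theorem divergence_spreadFlow {z : V} (hz : z ≠ y) :
    divergence (hconn.spreadFlow y z) = Pi.single z 1 - Pi.single y 1 := by
  have hm : (#(G.downNeighborFinset y z) : ℝ) ≠ 0 := by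
    exact_mod_cast (card_downNeighborFinset_pos hconn hz).ne'
  rw [spreadFlow, map_smul, map_add, map_sum, divergence_starFlow
    (fun h => (mem_downNeighborFinset.mp h).2.false)]
  simp only [divergence_pathFlow, sum_sub_distrib, sum_const, sub_add_sub_cancel, smul_sub,
    ← Nat.cast_smul_eq_nsmul ℝ, smul_smul, inv_mul_cancel₀ hm, one_smul]

theorem energy_spreadFlow_le {z : V} (hz : z ≠ y) :
    (G.levelConductance y).energy (hconn.spreadFlow y z) ≤
      2 ^ (G.dist z y - 1) * ((#(G.downNeighborFinset y z) : ℝ)⁻¹ + 1) := by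
  set c := G.levelConductance y
  set D := G.downNeighborFinset y z
  set A : ℝ := 2 ^ (G.dist z y - 1)
  have hm : (0 : ℝ) < #D := by exact_mod_cast card_downNeighborFinset_pos hconn hz
  have hA : ∀ u ∈ D, (2 : ℝ) ^ G.dist u y = A := fun u hu => by
    simp only [A, ← dist_add_one_of_mem_downNeighborFinset hconn hu, Nat.add_sub_cancel]
  have hstar : c.energy (starFlow z D) = #D * A := by
    rw [energy_starFlow c (fun h => (mem_downNeighborFinset.mp h).2.false), ← nsmul_eq_mul,
      ← sum_const]
    refine sum_congr rfl fun u hu => ?_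
    rw [levelConductance_w_of_adj hconn (mem_downNeighborFinset.mp hu).1,
      if_pos (mem_downNeighborFinset.mp hu).2, ← hA u hu,
      ← dist_add_one_of_mem_downNeighborFinset hconn hu, pow_succ]
    field_simp
  have hpaths : c.energy (∑ u ∈ D, hconn.pathFlow y u) ≤ #D * (#D * (A - 1)) := by
    refine (c.energy_sum_le D _).trans_eq ?_
    rw [sum_congr rfl fun u hu => by rw [energy_pathFlow, hA u hu], sum_const, nsmul_eq_mul]
  have hdisj := starFlow_mul_eq_zero (z := z) (D := D)
    (θ := ∑ u ∈ D, hconn.pathFlow y u)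
    (fun a b => by simp only [Finset.sum_apply, pathFlow_antisymm _ a b, sum_neg_distrib])
    (fun b => by
      rw [Finset.sum_apply, Finset.sum_apply]
      exact sum_eq_zero fun u hu =>
        pathFlow_eq_zero_of_dist_lt (mem_downNeighborFinset.mp hu).2 b)
  rw [spreadFlow, c.energy_smul, c.energy_add_of_mul_eq_zero hdisj, hstar]
  calc ((#D : ℝ)⁻¹) ^ 2 * (#D * A + c.energy (∑ u ∈ D, hconn.pathFlow y u))
      ≤ ((#D : ℝ)⁻¹) ^ 2 * (#D * A + #D * (#D * (A - 1))) := by gcongr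
    _ = A * ((#D : ℝ)⁻¹ + 1) - 1 := by field_simp; ring
    _ ≤ A * ((#D : ℝ)⁻¹ + 1) := by linarith

end SimpleGraph.Connected

namespace SimpleGraph

variable [Fintype V] [DecidableEq V] {G : SimpleGraph V} [DecidableRel G.Adj] {y : V}

theorem levelConductance_wdeg_mul_effResistance_le (hconn : G.Connected) {z : V} (hz : z ≠ y) :
    (G.levelConductance y).wdeg z * (G.levelConductance y).effResistance hconn z y ≤
      (G.degree z + #(G.downNeighborFinset y z)) *
        ((#(G.downNeighborFinset y z) : ℝ)⁻¹ + 1) / 2 := by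
  have hR := ((G.levelConductance y).effResistance_le_energy hconn hz (hconn.spreadFlow_antisymm z)
    (fun _ _ h => hconn.spreadFlow_eq_zero_of_not_adj z h) (hconn.divergence_spreadFlow hz)).trans
    (hconn.energy_spreadFlow_le hz)
  have hk : (2 : ℝ) ^ G.dist z y = 2 * 2 ^ (G.dist z y - 1) := by
    rw [← pow_succ', Nat.sub_add_cancel (hconn.pos_dist_of_ne hz)]
  rw [levelConductance_wdeg hconn]
  calc _ ≤ (G.degree z + #(G.downNeighborFinset y z) : ℝ) / 2 ^ G.dist z y *
        (2 ^ (G.dist z y - 1) * ((#(G.downNeighborFinset y z) : ℝ)⁻¹ + 1)) := by gcongr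
    _ = _ := by rw [hk]; field_simp

theorem levelConductance_wdeg_mul_effResistance_le_add (hconn : G.Connected) {z : V} (hz : z ≠ y) :
    (G.levelConductance y).wdeg z * (G.levelConductance y).effResistance hconn z y ≤
      G.degree z + #(G.downNeighborFinset y z) := by
  have hm : (1 : ℝ) ≤ #(G.downNeighborFinset y z) := by
    exact_mod_cast card_downNeighborFinset_pos hconn hz
  refine (levelConductance_wdeg_mul_effResistance_le hconn hz).trans ?_
  have : ((#(G.downNeighborFinset y z) : ℝ)⁻¹ + 1) / 2 ≤ 1 := by
    linarith [inv_le_one_of_one_le₀ hm]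
  rw [mul_div_assoc]
  exact mul_le_of_le_one_right (by positivity) this

theorem levelConductance_wdeg_mul_effResistance_le_degree_add_one (hconn : G.Connected) {z : V}
    (hz : z ≠ y) :
    (G.levelConductance y).wdeg z * (G.levelConductance y).effResistance hconn z y ≤
      G.degree z + 1 := by
  have hm : (1 : ℝ) ≤ #(G.downNeighborFinset y z) := by
    exact_mod_cast card_downNeighborFinset_pos hconn hz
  have hmd : (#(G.downNeighborFinset y z) : ℝ) ≤ G.degree z := by
    exact_mod_cast card_downNeighborFinset_le_degree z
  refine (levelConductance_wdeg_mul_effResistance_le hconn hz).trans ?_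
  set m : ℝ := (#(G.downNeighborFinset y z) : ℝ)
  rw [show ((G.degree z : ℝ) + m) * (m⁻¹ + 1) / 2 = (G.degree z + m) * (1 + m) / (2 * m) by
    field_simp, div_le_iff₀ (by positivity)]
  nlinarith [mul_nonneg (sub_nonneg.mpr hm) (sub_nonneg.mpr hmd)]

theorem levelConductance_hitTime_lt_three_mul_card_edgeFinset [Nontrivial V] (hconn : G.Connected)
    (x : V) : (G.levelConductance y).hitTime hconn y x < 3 * #G.edgeFinset := by
  have hsum :
      ∑ z ∈ univ.erase y, (G.degree z + #(G.downNeighborFinset y z)) < 3 * #G.edgeFinset := by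
    have hdeg := sum_erase_add univ (fun z => G.degree z) (mem_univ y)
    have hdown := sum_le_sum_of_subset (f := fun z => #(G.downNeighborFinset y z))
      (erase_subset y univ)
    have := hconn.preconnected.degree_pos_of_nontrivial y
    have := G.sum_degrees_eq_twice_card_edges
    have := sum_card_downNeighborFinset_le (G := G) (y := y)
    rw [sum_add_distrib]
    omega
  calc _ ≤ ∑ z ∈ univ.erase y,
        (G.levelConductance y).wdeg z * (G.levelConductance y).effResistance hconn z y :=
        (G.levelConductance y).hitTime_le_sum hconn x
    _ ≤ ∑ z ∈ univ.erase y, ((G.degree z + #(G.downNeighborFinset y z) : ℕ) : ℝ) :=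
        sum_le_sum fun z hz => by
          push_cast
          exact levelConductance_wdeg_mul_effResistance_le_add hconn (ne_of_mem_erase hz)
    _ < 3 * #G.edgeFinset := by exact_mod_cast hsum

theorem levelConductance_hitTime_lt_card_sq (hconn : G.Connected) (x : V) :
    (G.levelConductance y).hitTime hconn y x < Fintype.card V ^ 2 := by
  have hsum : ∑ z ∈ univ.erase y, (G.degree z + 1) < Fintype.card V ^ 2 := by
    calc ∑ z ∈ univ.erase y, (G.degree z + 1) ≤ ∑ _z ∈ univ.erase y, Fintype.card V :=
          sum_le_sum fun z _ => G.degree_lt_card_verts z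
      _ = (Fintype.card V - 1) * Fintype.card V := by
          rw [sum_const, card_erase_of_mem (mem_univ y), card_univ, smul_eq_mul]
      _ < Fintype.card V ^ 2 := by
          have := Fintype.card_pos_iff.mpr ⟨y⟩
          rw [sq]
          exact Nat.mul_lt_mul_of_pos_right (by omega) this
  calc _ ≤ ∑ z ∈ univ.erase y,
        (G.levelConductance y).wdeg z * (G.levelConductance y).effResistance hconn z y :=
        (G.levelConductance y).hitTime_le_sum hconn x
    _ ≤ ∑ z ∈ univ.erase y, ((G.degree z + 1 : ℕ) : ℝ) :=
        sum_le_sum fun z hz => by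
          push_cast
          exact levelConductance_wdeg_mul_effResistance_le_degree_add_one hconn (ne_of_mem_erase hz)
    _ < Fintype.card V ^ 2 := by exact_mod_cast hsum

end SimpleGraph

end

/-- For any finite connected graph `G` on `n ≥ 2` vertices, the optimal choice-random-walk
expected hitting time between any two vertices is less than `3|E(G)|` and less than `n²`. -/
theorem crw_hitting_lt_three_edges_and_n_sq {V : Type*} [Fintype V] [DecidableEq V]
    [Nontrivial V] (G : SimpleGraph V) [DecidableRel G.Adj] (hconn : G.Connected) :
    ∀ x y : V,
      crwHitTime G x {y} < 3 * (G.edgeFinset.card : ℝ≥0∞) ∧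
      crwHitTime G x {y} < ((Fintype.card V : ℝ≥0∞)) ^ 2 := by
  intro x y
  set c := G.levelConductance y
  have hle : crwHitTime G x {y} ≤ ENNReal.ofReal (c.hitTime hconn y x) :=
    crwHitTime_le_ofReal_s10 G (c.hitTime_nonneg hconn) (c.hitTime_ground hconn) (fun v hv =>
      ⟨_, G.isCRWStep_levelConductance hconn v,
        c.hitTime_eq_one_add hconn hv (c.wdeg_pos_of_adj (hconn.adj_stepToward hv))⟩) x
  have hnonneg := c.hitTime_nonneg hconn (y := y) x
  refine ⟨hle.trans_lt ?_, hle.trans_lt ?_⟩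
  · rw [ENNReal.ofReal_lt_iff_lt_toReal hnonneg (by finiteness)]
    simpa using G.levelConductance_hitTime_lt_three_mul_card_edgeFinset hconn x
  · rw [ENNReal.ofReal_lt_iff_lt_toReal hnonneg (by finiteness)]
    simpa using G.levelConductance_hitTime_lt_card_sq hconn x
end

section
/- Let G be a locally finite connected weighted graph whose weight function w satisfies: for any two edges xy, xz sharing a vertex, w(xy)/w(xz) ∈ {1/2, 1, 2}. Then there is an unchanging choice-random-walk strategy on G whose transition probabilities equal those of the weighted random walk defined by w. In particular, for a vertex v with neighbour set partitioned as A ∪ B, there is a strategy making each neighbour in B exactly twice as likely as each neighbour in A. -/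
open Finset

lemma crw_key {V : Type*} [DecidableEq V] (G : SimpleGraph V)
    [DecidableRel G.Adj] [∀ v : V, Fintype (G.neighborSet v)]
    (v : V) (A B : Finset V) (hAB : Disjoint A B) (hU : A ∪ B = G.neighborFinset v) :
    ∃ β : V → V → ℝ,
      (∀ i ∈ G.neighborFinset v, ∀ j ∈ G.neighborFinset v,
        0 ≤ β i j ∧ β i j ≤ 1 ∧ β j i = 1 - β i j) ∧
      (∀ i ∈ A, (2 * ∑ j ∈ G.neighborFinset v, β i j) / ((G.degree v : ℝ)) ^ 2 =
        1 / ((A.card : ℝ) + 2 * B.card)) ∧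
      (∀ i ∈ B, (2 * ∑ j ∈ G.neighborFinset v, β i j) / ((G.degree v : ℝ)) ^ 2 =
        2 / ((A.card : ℝ) + 2 * B.card)) := by
  classical
  set a : ℝ := (A.card : ℝ) with ha_def
  set b : ℝ := (B.card : ℝ) with hb_def
  have ha0 : 0 ≤ a := Nat.cast_nonneg _
  have hb0 : 0 ≤ b := Nat.cast_nonneg _
  set x : ℝ := b / (2 * (a + 2 * b)) with hx_def
  have hx0 : 0 ≤ x := by positivity
  have hxh : x ≤ 1/2 := by
    rcases eq_or_lt_of_le hb0 with h | h
    · simp [hx_def, ← h]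
    · rw [hx_def, div_le_iff₀ (by positivity)]
      linarith
  have hd : (G.degree v : ℝ) = a + b := by
    have : G.degree v = A.card + B.card := by
      rw [← SimpleGraph.card_neighborFinset_eq_degree, ← hU,
        Finset.card_union_of_disjoint hAB]
    rw [this]; push_cast; ring
  refine ⟨fun i j => if i ∈ A ∧ j ∈ B then x else if i ∈ B ∧ j ∈ A then 1 - x else 1/2,
    ?_, ?_, ?_⟩
  · intro i hi j hj
    simp only []
    rw [← hU] at hi hj
    have hA_nB : ∀ {z : V}, z ∈ A → z ∉ B := fun h => Finset.disjoint_left.mp hAB h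
    have hB_nA : ∀ {z : V}, z ∈ B → z ∉ A := fun h => Finset.disjoint_right.mp hAB h
    rcases Finset.mem_union.mp hi with hiA | hiB <;>
      rcases Finset.mem_union.mp hj with hjA | hjB
    · have h1 : ¬(i ∈ A ∧ j ∈ B) := fun h => hA_nB hjA h.2
      have h2 : ¬(i ∈ B ∧ j ∈ A) := fun h => hA_nB hiA h.1
      have h3 : ¬(j ∈ A ∧ i ∈ B) := fun h => hA_nB hiA h.2
      have h4 : ¬(j ∈ B ∧ i ∈ A) := fun h => hA_nB hjA h.1
      rw [if_neg h1, if_neg h2, if_neg h3, if_neg h4]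
      norm_num
    · have h1 : i ∈ A ∧ j ∈ B := ⟨hiA, hjB⟩
      have h3 : ¬(j ∈ A ∧ i ∈ B) := fun h => hB_nA hjB h.1
      have h4 : j ∈ B ∧ i ∈ A := ⟨hjB, hiA⟩
      rw [if_pos h1, if_neg h3, if_pos h4]
      exact ⟨hx0, by linarith, by ring⟩
    · have h1 : ¬(i ∈ A ∧ j ∈ B) := fun h => hB_nA hiB h.1
      have h2 : i ∈ B ∧ j ∈ A := ⟨hiB, hjA⟩
      have h3 : j ∈ A ∧ i ∈ B := ⟨hjA, hiB⟩
      rw [if_neg h1, if_pos h2, if_pos h3]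
      exact ⟨by linarith, by linarith, by ring⟩
    · have h1 : ¬(i ∈ A ∧ j ∈ B) := fun h => hB_nA hiB h.1
      have h2 : ¬(i ∈ B ∧ j ∈ A) := fun h => hB_nA hjB h.2
      have h3 : ¬(j ∈ A ∧ i ∈ B) := fun h => hB_nA hjB h.1
      have h4 : ¬(j ∈ B ∧ i ∈ A) := fun h => hB_nA hiB h.2
      rw [if_neg h1, if_neg h2, if_neg h3, if_neg h4]
      norm_num
  · intro i hiA
    simp only []
    have hA_nB : ∀ {z : V}, z ∈ A → z ∉ B := fun h => Finset.disjoint_left.mp hAB h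
    have hB_nA : ∀ {z : V}, z ∈ B → z ∉ A := fun h => Finset.disjoint_right.mp hAB h
    have ha1 : 1 ≤ a := by
      rw [ha_def]; exact_mod_cast Finset.card_pos.mpr ⟨i, hiA⟩
    have hsum : ∑ j ∈ G.neighborFinset v,
        (if i ∈ A ∧ j ∈ B then x else if i ∈ B ∧ j ∈ A then 1 - x else 1/2)
        = a / 2 + b * x := by
      rw [← hU, Finset.sum_union hAB]
      have h1 : ∀ j ∈ A, (if i ∈ A ∧ j ∈ B then x else if i ∈ B ∧ j ∈ A then 1 - x
          else 1/2) = 1/2 := by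
        intro j hj
        rw [if_neg (fun h : i ∈ A ∧ j ∈ B => hA_nB hj h.2), if_neg (fun h : i ∈ B ∧ j ∈ A => hA_nB hiA h.1)]
      have h2 : ∀ j ∈ B, (if i ∈ A ∧ j ∈ B then x else if i ∈ B ∧ j ∈ A then 1 - x
          else 1/2) = x := by
        intro j hj
        rw [if_pos ⟨hiA, hj⟩]
      rw [Finset.sum_congr rfl h1, Finset.sum_congr rfl h2, Finset.sum_const,
        Finset.sum_const, nsmul_eq_mul, nsmul_eq_mul, ← ha_def, ← hb_def]
      ring
    rw [hsum, hd, hx_def]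
    have hpos1 : 0 < a + 2 * b := by linarith
    have hpos2 : 0 < a + b := by linarith
    field_simp
    ring
  · intro i hiB
    simp only []
    have hA_nB : ∀ {z : V}, z ∈ A → z ∉ B := fun h => Finset.disjoint_left.mp hAB h
    have hB_nA : ∀ {z : V}, z ∈ B → z ∉ A := fun h => Finset.disjoint_right.mp hAB h
    have hb1 : 1 ≤ b := by
      rw [hb_def]; exact_mod_cast Finset.card_pos.mpr ⟨i, hiB⟩
    have hsum : ∑ j ∈ G.neighborFinset v,
        (if i ∈ A ∧ j ∈ B then x else if i ∈ B ∧ j ∈ A then 1 - x else 1/2)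
        = a * (1 - x) + b / 2 := by
      rw [← hU, Finset.sum_union hAB]
      have h1 : ∀ j ∈ A, (if i ∈ A ∧ j ∈ B then x else if i ∈ B ∧ j ∈ A then 1 - x
          else 1/2) = 1 - x := by
        intro j hj
        rw [if_neg (fun h : i ∈ A ∧ j ∈ B => hB_nA hiB h.1), if_pos ⟨hiB, hj⟩]
      have h2 : ∀ j ∈ B, (if i ∈ A ∧ j ∈ B then x else if i ∈ B ∧ j ∈ A then 1 - x
          else 1/2) = 1/2 := by
        intro j hj
        rw [if_neg (fun h : i ∈ A ∧ j ∈ B => hB_nA hiB h.1), if_neg (fun h : i ∈ B ∧ j ∈ A => hA_nB h.2 hj)]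
      rw [Finset.sum_congr rfl h1, Finset.sum_congr rfl h2, Finset.sum_const,
        Finset.sum_const, nsmul_eq_mul, nsmul_eq_mul, ← ha_def, ← hb_def]
      ring
    rw [hsum, hd, hx_def]
    have hpos1 : 0 < a + 2 * b := by linarith
    have hpos2 : 0 < a + b := by linarith
    field_simp
    ring


/-- Let `G` be a locally finite connected weighted graph whose (symmetric, positive on
edges) weight function `w` satisfies: any two edges sharing a vertex have weights equal or
differing by a factor of exactly `2`.  Then there is an unchanging choice-random-walk
strategy `α` on `G` (at each vertex `v`, two uniform random neighbours are offered
independently with replacement and `i` is chosen over `j` with probability `α v i j`) whose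
transition probabilities `2 (∑_{j ∈ Γ(v)} α v i j)/deg(v)²` equal the weighted random walk
probabilities `w v i / ∑_{j ∈ Γ(v)} w v j`.  In particular, for a vertex `v` whose
neighbourhood is partitioned as `A ∪ B`, there is a strategy at `v` making each neighbour
in `B` exactly twice as likely as each neighbour in `A`, i.e. moving to each `i ∈ A` with
probability `1/(|A| + 2|B|)` and to each `i ∈ B` with probability `2/(|A| + 2|B|)`. -/
theorem crw_emulates_doubling_weights {V : Type*} [DecidableEq V] (G : SimpleGraph V)
    [DecidableRel G.Adj] [∀ v : V, Fintype (G.neighborSet v)] (hconn : G.Connected)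
    (w : V → V → ℝ)
    (hsymm : ∀ u v, w u v = w v u)
    (hpos : ∀ u v, G.Adj u v → 0 < w u v)
    (hratio : ∀ x y z, G.Adj x y → G.Adj x z →
      w x y = w x z ∨ w x y = 2 * w x z ∨ 2 * w x y = w x z) :
    (∃ α : V → V → V → ℝ,
      (∀ v : V, ∀ i ∈ G.neighborFinset v, ∀ j ∈ G.neighborFinset v,
        0 ≤ α v i j ∧ α v i j ≤ 1 ∧ α v j i = 1 - α v i j) ∧
      ∀ v : V, ∀ i ∈ G.neighborFinset v,
        (2 * ∑ j ∈ G.neighborFinset v, α v i j) / ((G.degree v : ℝ)) ^ 2 =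
          w v i / ∑ j ∈ G.neighborFinset v, w v j) ∧
    (∀ v : V, ∀ A B : Finset V, Disjoint A B → A ∪ B = G.neighborFinset v →
      ∃ β : V → V → ℝ,
        (∀ i ∈ G.neighborFinset v, ∀ j ∈ G.neighborFinset v,
          0 ≤ β i j ∧ β i j ≤ 1 ∧ β j i = 1 - β i j) ∧
        (∀ i ∈ A, (2 * ∑ j ∈ G.neighborFinset v, β i j) / ((G.degree v : ℝ)) ^ 2 =
          1 / ((A.card : ℝ) + 2 * B.card)) ∧
        (∀ i ∈ B, (2 * ∑ j ∈ G.neighborFinset v, β i j) / ((G.degree v : ℝ)) ^ 2 =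
          2 / ((A.card : ℝ) + 2 * B.card))) := by

  classical
  refine ⟨?_, fun v A B hAB hU => crw_key G v A B hAB hU⟩
  have hstep : ∀ v : V, ∃ β : V → V → ℝ,
      (∀ i ∈ G.neighborFinset v, ∀ j ∈ G.neighborFinset v,
        0 ≤ β i j ∧ β i j ≤ 1 ∧ β j i = 1 - β i j) ∧
      ∀ i ∈ G.neighborFinset v,
        (2 * ∑ j ∈ G.neighborFinset v, β i j) / ((G.degree v : ℝ)) ^ 2 =
          w v i / ∑ j ∈ G.neighborFinset v, w v j := by
    intro v
    set A : Finset V := (G.neighborFinset v).filter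
      (fun i => ∀ j ∈ G.neighborFinset v, w v i ≤ w v j) with hA_def
    set B : Finset V := G.neighborFinset v \ A with hB_def
    have hAB : Disjoint A B := Finset.disjoint_sdiff
    have hU : A ∪ B = G.neighborFinset v := by
      rw [hB_def]
      exact Finset.union_sdiff_of_subset (Finset.filter_subset _ _)
    obtain ⟨β, hβ1, hβ2, hβ3⟩ := crw_key G v A B hAB hU
    refine ⟨β, hβ1, ?_⟩
    intro i hi
    have hadj : ∀ k ∈ G.neighborFinset v, G.Adj v k := by
      intro k hk
      exact (SimpleGraph.mem_neighborFinset G v k).mp hk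
    obtain ⟨i0, hi0, hmin⟩ := Finset.exists_min_image (G.neighborFinset v) (w v) ⟨i, hi⟩
    have hi0A : i0 ∈ A := Finset.mem_filter.mpr ⟨hi0, hmin⟩
    have hm_pos : 0 < w v i0 := hpos v i0 (hadj i0 hi0)
    have hAval : ∀ j ∈ A, w v j = w v i0 := by
      intro j hj
      obtain ⟨hjN, hjmin⟩ := Finset.mem_filter.mp hj
      exact le_antisymm (hjmin i0 hi0) (hmin j hjN)
    have hBval : ∀ j ∈ B, w v j = 2 * w v i0 := by
      intro j hj
      obtain ⟨hjN, hjnot⟩ := Finset.mem_sdiff.mp hj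
      have hlt : w v i0 < w v j := by
        rcases lt_or_ge (w v i0) (w v j) with h | h
        · exact h
        · exact absurd (Finset.mem_filter.mpr
            ⟨hjN, fun k hk => le_trans h (hmin k hk)⟩) hjnot
      rcases hratio v j i0 (hadj j hjN) (hadj i0 hi0) with h | h | h
      · linarith
      · exact h
      · linarith
    have hS : ∑ j ∈ G.neighborFinset v, w v j
        = (A.card : ℝ) * w v i0 + (B.card : ℝ) * (2 * w v i0) := by
      rw [← hU, Finset.sum_union hAB, Finset.sum_congr rfl hAval,
        Finset.sum_congr rfl hBval, Finset.sum_const, Finset.sum_const,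
        nsmul_eq_mul, nsmul_eq_mul]
    have ha1 : (1 : ℝ) ≤ (A.card : ℝ) := by
      exact_mod_cast Finset.card_pos.mpr ⟨i0, hi0A⟩
    have hb0 : (0 : ℝ) ≤ (B.card : ℝ) := Nat.cast_nonneg _
    rw [← hU] at hi
    have hden1 : (0:ℝ) < (A.card : ℝ) + 2 * B.card := by linarith
    have hden2 : (0:ℝ) < (A.card : ℝ) * w v i0 + (B.card : ℝ) * (2 * w v i0) := by
      nlinarith
    rcases Finset.mem_union.mp hi with hiA | hiB
    · rw [hβ2 i hiA, hS, hAval i hiA, div_eq_div_iff hden1.ne' hden2.ne']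
      ring
    · rw [hβ3 i hiB, hS, hBval i hiB, div_eq_div_iff hden1.ne' hden2.ne']
      ring
  exact ⟨fun v => (hstep v).choose, fun v => ((hstep v).choose_spec).1,
    fun v => ((hstep v).choose_spec).2⟩
end

section
/- Let X_t be a simple random walk on a finite connected graph on n vertices, and T_{n/2^x} the first time at most n/2^x vertices remain unvisited. Then E[T_{n/2^x}] ≤ 4(x+1)·t_hit, where t_hit is the maximal expected hitting time. -/
/-!
For every target `v`, `(t + 1) · P_w(τ_v > t) ≤ E_w τ_v ≤ t_hit` since `P_w(τ_v > j)` decreases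
in `j`. Hence with `k = ⌊2 t_hit⌋` the walk avoids `v` for `k` steps with probability `≤ 1/2`
from every start, and, by the Markov property, for `(x + 1) k` steps with probability
`≤ 2^{-(x+1)}`. Summing over `v` and applying Markov's inequality to the number of unvisited
vertices, a block of `(x + 1) k` steps leaves more than `n / 2^x` vertices unvisited with
probability `≤ 1/2`. Since "many vertices unvisited" on a trajectory persists on each of its
sub-blocks, it survives `a` consecutive blocks with probability `≤ 2^{-a}`, and summing the tail
gives `E[T] ≤ 2 (x + 1) k ≤ 4 (x + 1) t_hit`.
-/

open scoped ENNReal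

/-- The probability that a simple random walk on `G` started at `u` avoids `v` during its
first `t` steps. -/
noncomputable def srwAvoid {V : Type*} [Fintype V] [DecidableEq V]
    (G : SimpleGraph V) [DecidableRel G.Adj] (u v : V) (t : ℕ) : ℝ≥0∞ :=
  ∑ tr ∈ Finset.univ.filter (fun tr : Fin (t + 1) → V =>
      tr 0 = u ∧ (∀ i : Fin t, G.Adj (tr i.castSucc) (tr i.succ)) ∧ ∀ i, tr i ≠ v),
    ∏ i : Fin t, ((G.degree (tr i.castSucc) : ℝ≥0∞))⁻¹

/-- The expected hitting time of `v` from `u` for the simple random walk on `G`. -/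
noncomputable def srwHit {V : Type*} [Fintype V] [DecidableEq V]
    (G : SimpleGraph V) [DecidableRel G.Adj] (u v : V) : ℝ≥0∞ :=
  ∑' t : ℕ, srwAvoid G u v t

/-- The maximal expected hitting time `t_hit = max_{u,v} E_u[τ_v]`. -/
noncomputable def srwMaxHit {V : Type*} [Fintype V] [DecidableEq V]
    (G : SimpleGraph V) [DecidableRel G.Adj] : ℝ≥0∞ :=
  ⨆ u, ⨆ v, srwHit G u v

/-- The probability that after `t` steps of the simple random walk from `u`, strictly more
than `n / 2^x` vertices remain unvisited (i.e. `(number unvisited) · 2^x > n`). -/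
noncomputable def srwManyUnvisited {V : Type*} [Fintype V] [DecidableEq V]
    (G : SimpleGraph V) [DecidableRel G.Adj] (u : V) (x t : ℕ) : ℝ≥0∞ :=
  ∑ tr ∈ Finset.univ.filter (fun tr : Fin (t + 1) → V =>
      tr 0 = u ∧ (∀ i : Fin t, G.Adj (tr i.castSucc) (tr i.succ)) ∧
        Fintype.card V <
          (Finset.univ.filter (fun v : V => ∀ i, tr i ≠ v)).card * 2 ^ x),
    ∏ i : Fin t, ((G.degree (tr i.castSucc) : ℝ≥0∞))⁻¹

open Finset

section Trajectory

variable {V : Type*}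

def trajPrefix (s t : ℕ) (tr : Fin (s + t + 1) → V) : Fin (s + 1) → V :=
  fun i => tr ⟨i, by omega⟩

def trajSuffix (s t : ℕ) (tr : Fin (s + t + 1) → V) : Fin (t + 1) → V :=
  fun j => tr ⟨s + j, by omega⟩

theorem eq_of_trajPrefix_eq_of_trajSuffix_eq {s t : ℕ} {tr tr' : Fin (s + t + 1) → V}
    (hpre : trajPrefix s t tr = trajPrefix s t tr')
    (hsuf : trajSuffix s t tr = trajSuffix s t tr') : tr = tr' := by
  funext k
  by_cases hk : (k : ℕ) ≤ s
  · exact congrFun hpre ⟨k, by omega⟩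
  · rw [show k = ⟨s + (k - s), by omega⟩ from Fin.ext (by simp only; omega)]
    exact congrFun hsuf ⟨k - s, by omega⟩

def SplitClosed (P : ∀ t : ℕ, (Fin (t + 1) → V) → Prop) : Prop :=
  ∀ s t tr, P (s + t) tr → P s (trajPrefix s t tr) ∧ P t (trajSuffix s t tr)

theorem splitClosed_avoid (v : V) : SplitClosed fun _ (tr : Fin (_ + 1) → V) => ∀ i, tr i ≠ v :=
  fun _ _ _ h => ⟨fun _ => h _, fun _ => h _⟩

def IsSrwTraj (G : SimpleGraph V) {t : ℕ} (u : V) (tr : Fin (t + 1) → V) : Prop :=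
  tr 0 = u ∧ ∀ i : Fin t, G.Adj (tr i.castSucc) (tr i.succ)

variable {G : SimpleGraph V} {s t : ℕ} {u : V} {tr : Fin (s + t + 1) → V}

theorem IsSrwTraj.prefix (h : IsSrwTraj G u tr) : IsSrwTraj G u (trajPrefix s t tr) :=
  ⟨h.1, fun i => h.2 ⟨i, by omega⟩⟩

theorem IsSrwTraj.suffix (h : IsSrwTraj G u tr) :
    IsSrwTraj G (trajPrefix s t tr (Fin.last s)) (trajSuffix s t tr) :=
  ⟨rfl, fun i => h.2 ⟨s + i, by omega⟩⟩

end Trajectory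

section RandomWalk

variable {V : Type*} [Fintype V] (G : SimpleGraph V) [DecidableRel G.Adj]

/-- An isolated vertex contributes `0⁻¹ = ⊤`, but it is never followed by a step of a trajectory. -/
noncomputable def srwWeight {t : ℕ} (tr : Fin (t + 1) → V) : ℝ≥0∞ :=
  ∏ i : Fin t, ((G.degree (tr i.castSucc) : ℝ≥0∞))⁻¹

open Classical in
noncomputable def srwProb (u : V) (t : ℕ) (P : (Fin (t + 1) → V) → Prop) : ℝ≥0∞ :=
  ∑ tr ∈ univ.filter (fun tr => IsSrwTraj G u tr ∧ P tr), srwWeight G tr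

variable {G}

theorem srwWeight_eq_mul (s t : ℕ) (tr : Fin (s + t + 1) → V) :
    srwWeight G tr = srwWeight G (trajPrefix s t tr) * srwWeight G (trajSuffix s t tr) :=
  Fin.prod_univ_add (fun i : Fin (s + t) => ((G.degree (tr i.castSucc) : ℝ≥0∞))⁻¹)

/-- The Markov property at time `s`. -/
theorem srwProb_add_le {u : V} {s t : ℕ} {P : (Fin (s + t + 1) → V) → Prop}
    {Q : (Fin (s + 1) → V) → Prop} {R : (Fin (t + 1) → V) → Prop} {B : ℝ≥0∞}
    (hsplit : ∀ tr, IsSrwTraj G u tr → P tr → Q (trajPrefix s t tr) ∧ R (trajSuffix s t tr))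
    (hR : ∀ w, srwProb G w t R ≤ B) :
    srwProb G u (s + t) P ≤ srwProb G u s Q * B := by
  classical
  set A := univ.filter (fun tr => IsSrwTraj G u tr ∧ P tr)
  set AQ := univ.filter (fun tr => IsSrwTraj G u tr ∧ Q tr)
  set AR := fun w => univ.filter (fun tr => IsSrwTraj G w tr ∧ R tr)
  let split : (Fin (s + t + 1) → V) → Σ _ : Fin (s + 1) → V, Fin (t + 1) → V :=
    fun tr => ⟨trajPrefix s t tr, trajSuffix s t tr⟩
  have hinj : Set.InjOn split A := fun tr _ tr' _ h =>
    eq_of_trajPrefix_eq_of_trajSuffix_eq (Sigma.mk.inj h).1 (eq_of_heq (Sigma.mk.inj h).2)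
  have hmaps : A.image split ⊆ AQ.sigma fun tr₁ => AR (tr₁ (Fin.last s)) := by
    simp only [subset_iff, mem_image, mem_sigma, A, AQ, AR, mem_filter, mem_univ, true_and]
    rintro _ ⟨tr, ⟨htr, hP⟩, rfl⟩
    exact ⟨⟨htr.prefix, (hsplit tr htr hP).1⟩, htr.suffix, (hsplit tr htr hP).2⟩
  calc srwProb G u (s + t) P
      = ∑ p ∈ A.image split, srwWeight G p.1 * srwWeight G p.2 := by
        rw [sum_image hinj]
        exact sum_congr rfl fun tr _ => srwWeight_eq_mul s t tr
    _ ≤ ∑ p ∈ AQ.sigma fun tr₁ => AR (tr₁ (Fin.last s)), srwWeight G p.1 * srwWeight G p.2 :=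
        sum_le_sum_of_subset hmaps
    _ = ∑ tr₁ ∈ AQ, srwWeight G tr₁ * srwProb G (tr₁ (Fin.last s)) t R := by
        rw [sum_sigma]
        refine sum_congr rfl fun tr₁ _ => ?_
        rw [srwProb, mul_sum]
    _ ≤ ∑ tr₁ ∈ AQ, srwWeight G tr₁ * B := sum_le_sum fun tr₁ _ => mul_le_mul_right (hR _) _
    _ = srwProb G u s Q * B := by rw [← sum_mul]; rfl

theorem srwProb_zero_le_one (u : V) (P : (Fin (0 + 1) → V) → Prop) : srwProb G u 0 P ≤ 1 := by
  classical
  unfold srwProb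
  calc _ ≤ ∑ tr ∈ {fun _ => u}, srwWeight G tr := by
        refine sum_le_sum_of_subset ?_
        simp only [subset_iff, mem_filter, mem_singleton]
        rintro tr ⟨-, ⟨h0, -⟩, -⟩
        exact funext fun i => Fin.fin_one_eq_zero i ▸ h0
    _ = 1 := by simp [srwWeight]

theorem srwProb_one_le_one (u : V) (P : (Fin (1 + 1) → V) → Prop) : srwProb G u 1 P ≤ 1 := by
  classical
  unfold srwProb
  set A := univ.filter (fun tr : Fin (1 + 1) → V => IsSrwTraj G u tr ∧ P tr)
  have hinj : Set.InjOn (fun tr : Fin (1 + 1) → V => tr 1) A := by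
    simp only [Set.InjOn, A, coe_filter]
    rintro tr ⟨-, ⟨h0, -⟩, -⟩ tr' ⟨-, ⟨h0', -⟩, -⟩ h1
    funext i
    fin_cases i
    exacts [h0.trans h0'.symm, h1]
  calc _ = ∑ z ∈ A.image (fun tr => tr 1), ((G.degree u : ℝ≥0∞))⁻¹ := by
        rw [sum_image hinj]
        refine sum_congr rfl fun tr htr => ?_
        obtain ⟨-, ⟨h0, -⟩, -⟩ := mem_filter.1 htr
        rw [srwWeight, Fin.prod_univ_one]
        exact congrArg (fun w => ((G.degree w : ℝ≥0∞))⁻¹) h0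
    _ ≤ ∑ z ∈ G.neighborFinset u, ((G.degree u : ℝ≥0∞))⁻¹ := by
        refine sum_le_sum_of_subset ?_
        simp only [subset_iff, A, mem_image, mem_filter, SimpleGraph.mem_neighborFinset]
        rintro _ ⟨tr, ⟨-, ⟨h0, hadj⟩, -⟩, rfl⟩
        simpa [h0] using hadj 0
    _ ≤ 1 := by
        rw [sum_const, SimpleGraph.card_neighborFinset_eq_degree, nsmul_eq_mul]
        exact ENNReal.mul_inv_le_one _

theorem srwProb_le_one (u : V) (t : ℕ) (P : (Fin (t + 1) → V) → Prop) : srwProb G u t P ≤ 1 := by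
  induction t generalizing u with
  | zero => exact srwProb_zero_le_one u P
  | succ t ih =>
    calc srwProb G u (t + 1) P ≤ srwProb G u t (fun _ => True) * 1 :=
          srwProb_add_le (R := fun _ => True) (fun _ _ _ => ⟨trivial, trivial⟩)
            fun w => srwProb_one_le_one w _
      _ ≤ 1 := by simpa using ih u _

variable {P : ∀ t : ℕ, (Fin (t + 1) → V) → Prop}

theorem SplitClosed.antitone_srwProb (hP : SplitClosed P) (u : V) :
    Antitone fun t => srwProb G u t (P t) := by
  intro s t hst
  obtain ⟨r, rfl⟩ := Nat.exists_eq_add_of_le hst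
  simpa using srwProb_add_le (R := fun _ => True) (fun tr _ h => ⟨(hP s r tr h).1, trivial⟩)
    fun w => srwProb_le_one w r _

theorem SplitClosed.srwProb_mul_le (hP : SplitClosed P) {k : ℕ} {B : ℝ≥0∞}
    (hk : ∀ w, srwProb G w k (P k) ≤ B) (a : ℕ) (u : V) :
    srwProb G u (a * k) (P (a * k)) ≤ B ^ a := by
  induction a generalizing u with
  | zero => simpa using srwProb_le_one (G := G) u (0 * k) _
  | succ a ih =>
    rw [Nat.succ_mul, pow_succ]
    exact (srwProb_add_le (fun tr _ => hP _ _ tr) hk).trans (mul_le_mul_left (ih u) _)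

end RandomWalk

theorem ENNReal.tsum_le_two_mul_of_antitone {f : ℕ → ℝ≥0∞} (hf : Antitone f) {L : ℕ}
    (h : ∀ a, f (a * L) ≤ 2⁻¹ ^ a) : ∑' t, f t ≤ 2 * L := by
  rcases L.eq_zero_or_pos with rfl | hL
  · have hf0 : f 0 ≤ 0 := ge_of_tendsto'
      (ENNReal.tendsto_pow_atTop_nhds_zero_of_lt_one (ENNReal.inv_lt_one.2 one_lt_two))
      fun a => by simpa using h a
    simp [ENNReal.tsum_eq_zero.2 fun t => le_zero_iff.1 ((hf (Nat.zero_le t)).trans hf0)]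
  have : NeZero L := ⟨hL.ne'⟩
  calc ∑' t, f t = ∑' p : ℕ × Fin L, f (p.1 * L + p.2) :=
        ((Nat.divModEquiv L).symm.tsum_eq f).symm
    _ ≤ ∑' p : ℕ × Fin L, 2⁻¹ ^ p.1 :=
        ENNReal.tsum_le_tsum fun p => (hf (Nat.le_add_right _ _)).trans (h p.1)
    _ = L * ∑' a : ℕ, 2⁻¹ ^ a := by
        rw [ENNReal.tsum_prod (f := fun a (_ : Fin L) => (2⁻¹ : ℝ≥0∞) ^ a), ← ENNReal.tsum_mul_left]
        simp
    _ = 2 * L := by rw [ENNReal.tsum_geometric, ENNReal.one_sub_inv_two, inv_inv, mul_comm]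

section Unvisited

variable {V : Type*} [Fintype V] [DecidableEq V] {G : SimpleGraph V} [DecidableRel G.Adj]

theorem srwAvoid_eq_srwProb (u v : V) (t : ℕ) :
    srwAvoid G u v t = srwProb G u t fun tr => ∀ i, tr i ≠ v := by
  unfold srwAvoid srwProb
  congr 1
  ext tr
  simp only [mem_filter, IsSrwTraj, and_assoc]

theorem srwManyUnvisited_eq_srwProb (u : V) (x t : ℕ) :
    srwManyUnvisited G u x t = srwProb G u t fun tr =>
      Fintype.card V < #(univ.filter fun v => ∀ i, tr i ≠ v) * 2 ^ x := by
  unfold srwManyUnvisited srwProb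
  congr 1
  ext tr
  simp only [mem_filter, IsSrwTraj, and_assoc]

theorem splitClosed_manyUnvisited (x : ℕ) :
    SplitClosed fun _ (tr : Fin (_ + 1) → V) =>
      Fintype.card V < #(univ.filter fun v => ∀ i, tr i ≠ v) * 2 ^ x := by
  refine fun _ _ _ h => ⟨h.trans_le ?_, h.trans_le ?_⟩ <;>
    exact Nat.mul_le_mul_right _ (card_le_card (monotone_filter_right _ fun _ _ hv _ => hv _))

theorem srwAvoid_antitone (u v : V) : Antitone (srwAvoid G u v) := by
  simpa only [← srwAvoid_eq_srwProb] using (splitClosed_avoid v).antitone_srwProb (G := G) u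

theorem succ_mul_srwAvoid_le_srwHit (u v : V) (t : ℕ) :
    (t + 1 : ℝ≥0∞) * srwAvoid G u v t ≤ srwHit G u v :=
  calc (t + 1 : ℝ≥0∞) * srwAvoid G u v t = ∑ _j ∈ range (t + 1), srwAvoid G u v t := by
        rw [sum_const, card_range, nsmul_eq_mul, Nat.cast_succ]
    _ ≤ ∑ j ∈ range (t + 1), srwAvoid G u v j :=
        sum_le_sum fun _ hj => srwAvoid_antitone u v (Nat.lt_succ_iff.1 (mem_range.1 hj))
    _ ≤ srwHit G u v := ENNReal.sum_le_tsum _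

theorem srwHit_le_srwMaxHit (u v : V) : srwHit G u v ≤ srwMaxHit G :=
  le_iSup₂ (f := fun u v => srwHit G u v) u v

theorem card_mul_srwManyUnvisited_le (u : V) (x t : ℕ) :
    Fintype.card V * srwManyUnvisited G u x t ≤ 2 ^ x * ∑ v, srwAvoid G u v t := by
  classical
  simp only [srwManyUnvisited_eq_srwProb, srwAvoid_eq_srwProb, srwProb, sum_filter, mul_sum]
  rw [sum_comm]
  refine sum_le_sum fun tr _ => ?_
  by_cases htr : IsSrwTraj G u tr
  · simp only [htr, true_and, ← mul_sum, ← sum_filter, sum_const, nsmul_eq_mul]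
    split_ifs with hmany
    · calc (Fintype.card V : ℝ≥0∞) * srwWeight G tr
          ≤ (#(univ.filter fun v => ∀ i, tr i ≠ v) * 2 ^ x : ℕ) * srwWeight G tr := by
            gcongr
        _ = _ := by push_cast; ring
    · simp
  · simp [htr]

theorem srwManyUnvisited_antitone (u : V) (x : ℕ) : Antitone (srwManyUnvisited G u x) := by
  simpa only [← srwManyUnvisited_eq_srwProb] using
    (splitClosed_manyUnvisited x).antitone_srwProb (G := G) u

theorem srwAvoid_mul_le {v : V} {k : ℕ} {B : ℝ≥0∞} (hk : ∀ w, srwAvoid G w v k ≤ B) (u : V)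
    (a : ℕ) : srwAvoid G u v (a * k) ≤ B ^ a := by
  simpa only [srwAvoid_eq_srwProb] using
    (splitClosed_avoid v).srwProb_mul_le (G := G)
      (fun w => srwAvoid_eq_srwProb (G := G) w v k ▸ hk w) a u

theorem srwManyUnvisited_le_half {k : ℕ} (hk : ∀ w v : V, srwAvoid G w v k ≤ 2⁻¹) (u : V)
    (x : ℕ) : srwManyUnvisited G u x ((x + 1) * k) ≤ 2⁻¹ := by
  have hcard : (Fintype.card V : ℝ≥0∞) ≠ 0 := by simpa using (Fintype.card_pos_iff.2 ⟨u⟩).ne'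
  refine (ENNReal.mul_le_mul_iff_right hcard (ENNReal.natCast_ne_top _)).1 ?_
  calc Fintype.card V * srwManyUnvisited G u x ((x + 1) * k)
      ≤ 2 ^ x * ∑ v, srwAvoid G u v ((x + 1) * k) := card_mul_srwManyUnvisited_le u x _
    _ ≤ 2 ^ x * ∑ _v : V, (2⁻¹ : ℝ≥0∞) ^ (x + 1) := by
        gcongr with v
        exact srwAvoid_mul_le (fun w => hk w v) u (x + 1)
    _ = Fintype.card V * 2⁻¹ := by
        rw [sum_const, card_univ, nsmul_eq_mul, pow_succ, mul_left_comm, ← mul_assoc (2 ^ x),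
          ← mul_pow, ENNReal.mul_inv_cancel two_ne_zero ENNReal.ofNat_ne_top, one_pow, one_mul]

theorem srwManyUnvisited_mul_le {k : ℕ} (hk : ∀ w v : V, srwAvoid G w v k ≤ 2⁻¹) (u : V)
    (x a : ℕ) : srwManyUnvisited G u x (a * ((x + 1) * k)) ≤ 2⁻¹ ^ a := by
  simpa only [← srwManyUnvisited_eq_srwProb] using
    (splitClosed_manyUnvisited x).srwProb_mul_le (G := G)
      (fun w => srwManyUnvisited_eq_srwProb (G := G) w x _ ▸ srwManyUnvisited_le_half hk w x) a u

theorem srwAvoid_le_half_of_two_mul_srwMaxHit_le {k : ℕ} (hk : 2 * srwMaxHit G ≤ k + 1)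
    (w v : V) : srwAvoid G w v k ≤ 2⁻¹ := by
  have hk0 : (k + 1 : ℝ≥0∞) ≠ 0 := by positivity
  have hktop : (k + 1 : ℝ≥0∞) ≠ ⊤ := by finiteness
  rw [ENNReal.le_inv_iff_mul_le, ← ENNReal.mul_le_mul_iff_right hk0 hktop, mul_one]
  calc (k + 1) * (srwAvoid G w v k * 2) = 2 * ((k + 1) * srwAvoid G w v k) := by ring
    _ ≤ 2 * srwMaxHit G := by
        gcongr
        exact (succ_mul_srwAvoid_le_srwHit w v k).trans (srwHit_le_srwMaxHit w v)
    _ ≤ k + 1 := hk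

theorem exists_srwAvoid_le_half (hM : srwMaxHit G ≠ ⊤) :
    ∃ k : ℕ, (k : ℝ≥0∞) ≤ 2 * srwMaxHit G ∧ ∀ w v : V, srwAvoid G w v k ≤ 2⁻¹ := by
  set M := (2 * srwMaxHit G).toNNReal
  have hM' : (M : ℝ≥0∞) = 2 * srwMaxHit G := ENNReal.coe_toNNReal (by finiteness)
  refine ⟨⌊M⌋₊, ?_, srwAvoid_le_half_of_two_mul_srwMaxHit_le ?_⟩
  · rw [← hM']
    exact_mod_cast Nat.floor_le M.coe_nonneg
  · rw [← hM']
    exact_mod_cast (Nat.lt_floor_add_one M).le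

end Unvisited

theorem expected_time_to_few_unvisited_general {V : Type*} [Fintype V] [DecidableEq V]
    (G : SimpleGraph V) [DecidableRel G.Adj]
    (u : V) (x : ℕ) :
    (∑' t : ℕ, srwManyUnvisited G u x t) ≤ 4 * (x + 1) * srwMaxHit G := by
  by_cases hM : srwMaxHit G = ⊤
  · simp [hM]
  obtain ⟨k, hk2M, hk⟩ := exists_srwAvoid_le_half hM
  calc ∑' t, srwManyUnvisited G u x t ≤ 2 * ((x + 1) * k : ℕ) :=
        ENNReal.tsum_le_two_mul_of_antitone (srwManyUnvisited_antitone u x)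
          (srwManyUnvisited_mul_le hk u x)
    _ = 2 * (x + 1) * k := by push_cast; ring
    _ ≤ 2 * (x + 1) * (2 * srwMaxHit G) := by gcongr
    _ = 4 * (x + 1) * srwMaxHit G := by ring

/-- Let `T_{n/2^x}` be the first time at most `n/2^x` vertices remain unvisited by a simple
random walk on a finite connected graph on `n` vertices.  Then
`E[T_{n/2^x}] = ∑_{t≥0} P(T_{n/2^x} > t) ≤ 4(x+1)·t_hit`. -/
theorem expected_time_to_few_unvisited {V : Type*} [Fintype V] [DecidableEq V]
    (G : SimpleGraph V) [DecidableRel G.Adj] (hconn : G.Connected)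
    (u : V) (x : ℕ) :
    (∑' t : ℕ, srwManyUnvisited G u x t) ≤ 4 * (x + 1) * srwMaxHit G :=
  expected_time_to_few_unvisited_general G u x
end

section
/- Let T be a rooted tree of depth t with a {0,1}-value q(ℓ) at each leaf. Extend q to internal nodes by q(x) = (1/d(x)²)·Σ_{y,z ∈ children(x)} min(q(y),q(z)) and p by p(x) = (1/d(x))·Σ_{y ∈ children(x)} p(y) with p = q at leaves. Then q(root) ≤ p(root)². -/
lemma min_le_sqrt_mul_sqrt {a b : ℝ} (ha : 0 ≤ a) (hb : 0 ≤ b) :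
    min a b ≤ Real.sqrt a * Real.sqrt b := by
  rcases le_total a b with h | h
  · rw [min_eq_left h]
    calc a = Real.sqrt a * Real.sqrt a := (Real.mul_self_sqrt ha).symm
    _ ≤ Real.sqrt a * Real.sqrt b :=
        mul_le_mul_of_nonneg_left (Real.sqrt_le_sqrt h) (Real.sqrt_nonneg a)
  · rw [min_eq_right h]
    calc b = Real.sqrt b * Real.sqrt b := (Real.mul_self_sqrt hb).symm
    _ ≤ Real.sqrt a * Real.sqrt b :=
        mul_le_mul_of_nonneg_right (Real.sqrt_le_sqrt h) (Real.sqrt_nonneg b)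

/-- Tree-gadget avoidance theorem.  Let `children : N → Finset N` describe a rooted tree
(well-foundedness witnessed by a `depth` function decreasing towards the leaves).  Each leaf
`ℓ` carries a value `q ℓ ∈ {0,1}` with `p ℓ = q ℓ`; at internal nodes `q` is extended by the
min-of-two-choices rule `q x = (1/d(x)²) ∑_{y,z ∈ children x} min (q y) (q z)` and `p` by
the uniform average `p x = (1/d(x)) ∑_{y ∈ children x} p y`.  Then `q(root) ≤ p(root)²`. -/
theorem tree_gadget_avoid {N : Type*} [DecidableEq N]
    (children : N → Finset N) (depth : N → ℕ)
    (hdepth : ∀ x, ∀ y ∈ children x, depth y < depth x)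
    (q p : N → ℝ)
    (hleaf : ∀ x, children x = ∅ → (q x = 0 ∨ q x = 1) ∧ p x = q x)
    (hq : ∀ x, children x ≠ ∅ →
      q x = (∑ y ∈ children x, ∑ z ∈ children x, min (q y) (q z)) /
        ((children x).card : ℝ) ^ 2)
    (hp : ∀ x, children x ≠ ∅ →
      p x = (∑ y ∈ children x, p y) / ((children x).card : ℝ))
    (root : N) :
    q root ≤ p root ^ 2 := by
  have key : ∀ n : ℕ, ∀ x : N, depth x ≤ n → 0 ≤ q x ∧ Real.sqrt (q x) ≤ p x := by
    intro n
    induction n with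
    | zero =>
      intro x hx
      have hemp : children x = ∅ := by
        by_contra h
        obtain ⟨y, hy⟩ := Finset.nonempty_iff_ne_empty.mpr h
        have := hdepth x y hy
        omega
      obtain ⟨hq01, hpq⟩ := hleaf x hemp
      rcases hq01 with h | h <;> simp [h, hpq]
    | succ n ih =>
      intro x hx
      by_cases hemp : children x = ∅
      · obtain ⟨hq01, hpq⟩ := hleaf x hemp
        rcases hq01 with h | h <;> simp [h, hpq]
      · have hcard : (0:ℝ) < ((children x).card : ℝ) := by
          have : 0 < (children x).card := Finset.card_pos.mpr (Finset.nonempty_iff_ne_empty.mpr hemp)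
          exact_mod_cast this
        have hch : ∀ y ∈ children x, 0 ≤ q y ∧ Real.sqrt (q y) ≤ p y := by
          intro y hy
          exact ih y (by have := hdepth x y hy; omega)
        have hqx := hq x hemp
        have hpx := hp x hemp
        -- sum bound
        have hsum : (∑ y ∈ children x, ∑ z ∈ children x, min (q y) (q z)) ≤
            (∑ y ∈ children x, Real.sqrt (q y)) ^ 2 := by
          rw [sq, Finset.sum_mul_sum]
          apply Finset.sum_le_sum
          intro y hy
          apply Finset.sum_le_sum
          intro z hz
          exact min_le_sqrt_mul_sqrt (hch y hy).1 (hch z hz).1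
        have hsum2 : (∑ y ∈ children x, Real.sqrt (q y)) ≤ ∑ y ∈ children x, p y :=
          Finset.sum_le_sum fun y hy => (hch y hy).2
        have hsqrtnn : 0 ≤ ∑ y ∈ children x, Real.sqrt (q y) :=
          Finset.sum_nonneg fun y _ => Real.sqrt_nonneg _
        have hpnn : 0 ≤ p x := by
          rw [hpx]
          exact div_nonneg (le_trans hsqrtnn hsum2) hcard.le
        have hqnn : 0 ≤ q x := by
          rw [hqx]
          apply div_nonneg _ (by positivity)
          apply Finset.sum_nonneg; intro y hy
          apply Finset.sum_nonneg; intro z hz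
          exact le_min (hch y hy).1 (hch z hz).1
        have hqle : q x ≤ p x ^ 2 := by
          rw [hqx, hpx, div_pow, div_le_div_iff₀ (by positivity) (by positivity)]
          calc (∑ y ∈ children x, ∑ z ∈ children x, min (q y) (q z)) * ((children x).card : ℝ)^2
              ≤ (∑ y ∈ children x, p y)^2 * ((children x).card : ℝ)^2 := by
                apply mul_le_mul_of_nonneg_right _ (by positivity)
                exact le_trans hsum (pow_le_pow_left₀ hsqrtnn hsum2 2)
            _ = _ := by ring
        refine ⟨hqnn, ?_⟩
        calc Real.sqrt (q x) ≤ Real.sqrt (p x ^ 2) := Real.sqrt_le_sqrt hqle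
          _ = p x := by rw [Real.sqrt_sq hpnn]
  obtain ⟨hqnn, hsq⟩ := key (depth root) root le_rfl
  calc q root = Real.sqrt (q root) ^ 2 := (Real.sq_sqrt hqnn).symm
    _ ≤ p root ^ 2 := by
        apply pow_le_pow_left₀ (Real.sqrt_nonneg _) hsq
end
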